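/- arXiv:1604.03861 — 9 statements merged into one kernel-verified Lean document; each statement's English description precedes it below -/
import Mathlib

section
/- Let T be a finite tree of order at least 2 that is not a path. Then every exterior major vertex u of T with terminal degree at least 2 is adjacent to each of its terminal vertices if and only if every path joining two leaves of T at distance greater than 2 contains at least two major vertices. -/
open SimpleGraph

variable {V : Type*}

/-- `S` is a resolving set of `G`. -/
def isResolvingSet (G : SimpleGraph V) (S : Set V) : Prop :=
  ∀ x y : V, x ≠ y → ∃ u ∈ S, G.dist u x ≠ G.dist u y

/-- `S` is a dominating set of `G`. -/
def isDominatingSet (G : SimpleGraph V) (S : Set V) : Prop :=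
  ∀ x : V, x ∉ S → ∃ u ∈ S, G.Adj u x

/-- `S` is a metric-locating-dominating set of `G`. -/
def isMLDSet (G : SimpleGraph V) (S : Set V) : Prop :=
  isResolvingSet G S ∧ isDominatingSet G S

/-- `S` is a locating-dominating set of `G`. -/
def isLDSet (G : SimpleGraph V) (S : Set V) : Prop :=
  isDominatingSet G S ∧
    ∀ x ∉ S, ∀ y ∉ S, x ≠ y → G.neighborSet x ∩ S ≠ G.neighborSet y ∩ S

/-- vertices `u` and `v` doubly resolve the pair `{x, y}`. -/
def doublyResolves (G : SimpleGraph V) (u v x y : V) : Prop :=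
  (G.dist u x : ℤ) - (G.dist u y : ℤ) ≠ (G.dist v x : ℤ) - (G.dist v y : ℤ)

/-- the set `S` doubly resolves the pair `{x, y}`. -/
def setDoublyResolves (G : SimpleGraph V) (S : Set V) (x y : V) : Prop :=
  ∃ u ∈ S, ∃ v ∈ S, doublyResolves G u v x y

/-- `S` is a doubly resolving set of `G`. -/
def isDoublyResolvingSet (G : SimpleGraph V) (S : Set V) : Prop :=
  ∀ x y : V, x ≠ y → setDoublyResolves G S x y

/-- the metric dimension `dim G`. -/
noncomputable def metricDim (G : SimpleGraph V) : ℕ :=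
  sInf {n | ∃ S : Set V, isResolvingSet G S ∧ S.ncard = n}

/-- the domination number `γ(G)`. -/
noncomputable def domNum (G : SimpleGraph V) : ℕ :=
  sInf {n | ∃ S : Set V, isDominatingSet G S ∧ S.ncard = n}

/-- the metric-location-domination number `γ_M(G)`. -/
noncomputable def mldNum (G : SimpleGraph V) : ℕ :=
  sInf {n | ∃ S : Set V, isMLDSet G S ∧ S.ncard = n}

/-- the location-domination number `γ_L(G)`. -/
noncomputable def ldNum (G : SimpleGraph V) : ℕ :=
  sInf {n | ∃ S : Set V, isLDSet G S ∧ S.ncard = n}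

/-- the minimum cardinality `ψ(G)` of a doubly resolving set. -/
noncomputable def psiNum (G : SimpleGraph V) : ℕ :=
  sInf {n | ∃ S : Set V, isDoublyResolvingSet G S ∧ S.ncard = n}

/-- a leaf: a vertex of degree 1. -/
def isLeaf (G : SimpleGraph V) (x : V) : Prop := (G.neighborSet x).ncard = 1

/-- a support vertex: a vertex adjacent to some leaf. -/
def isSupport (G : SimpleGraph V) (u : V) : Prop := ∃ x, isLeaf G x ∧ G.Adj u x

/-- a strong support vertex: a vertex adjacent to at least two leaves. -/
def isStrongSupport (G : SimpleGraph V) (u : V) : Prop :=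
  2 ≤ {x | isLeaf G x ∧ G.Adj u x}.ncard

/-- `ℓ(G)`: the number of leaves. -/
noncomputable def numLeaves (G : SimpleGraph V) : ℕ := {x | isLeaf G x}.ncard

/-- `ℓ'(G)`: the number of leaves adjacent to a strong support vertex. -/
noncomputable def numStrongLeaves (G : SimpleGraph V) : ℕ :=
  {x | isLeaf G x ∧ ∃ u, isStrongSupport G u ∧ G.Adj u x}.ncard

/-- a major vertex: a vertex of degree at least 3. -/
def isMajor (G : SimpleGraph V) (u : V) : Prop := 3 ≤ (G.neighborSet u).ncard

/-- `x` is a terminal vertex of the major vertex `u`: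
`x` is a leaf and `u` is the major vertex closest to `x`. -/
def isTerminalOf (G : SimpleGraph V) (u x : V) : Prop :=
  isLeaf G x ∧ isMajor G u ∧ ∀ w, isMajor G w → w ≠ u → G.dist u x < G.dist w x

/-- the terminal degree `ter(u)` of `u`. -/
noncomputable def terDeg (G : SimpleGraph V) (u : V) : ℕ :=
  {x | isTerminalOf G u x}.ncard

/-- `G` is (isomorphic to) a path graph. -/
def isPathGraph (G : SimpleGraph V) : Prop :=
  ∃ n : ℕ, Nonempty (G ≃g SimpleGraph.pathGraph n)

/-! A path from a leaf `x` to a vertex `y` whose other vertices are not major is closed: every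
neighbour of a vertex of the path other than `y` lies on the path, so every walk leaving the path
passes through `y`. Consequently such a path ending at a major vertex `m` makes `x` a terminal
vertex of `m`, and two distinct terminal vertices `x, y` of `u` satisfy `d(x,y) = d(x,u) + d(u,y)`.

If a path between two leaves contains exactly one major vertex `m`, both leaves are terminal
vertices of `m`, hence adjacent to it, and the path has length at most 2; if it contains none, it is
closed at both ends, so it covers the tree and the tree is a path. Conversely, if a terminal vertex
`x` of `u` with `ter(u) ≥ 2` is not adjacent to `u`, another terminal vertex `y` of `u` gives
`d(x,y) = d(x,u) + d(u,y) ≥ 3`, while a major vertex `w ≠ u` on the `x`–`y` geodesic would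
give `d(x,w) + d(w,y) = d(x,y) ≤ d(x,u) + d(u,y) < d(x,w) + d(w,y)`. -/

namespace SimpleGraph

open Walk

variable {G : SimpleGraph V}

def TerminalsAdjacent (G : SimpleGraph V) : Prop :=
  ∀ u : V, isMajor G u → 2 ≤ terDeg G u → ∀ x : V, isTerminalOf G u x → G.Adj u x

def LongLeafPathsHaveTwoMajors (G : SimpleGraph V) : Prop :=
  ∀ x y : V, isLeaf G x → isLeaf G y → 2 < G.dist x y → ∀ p : G.Walk x y, p.IsPath →
    ∃ u v : V, u ≠ v ∧ isMajor G u ∧ isMajor G v ∧ u ∈ p.support ∧ v ∈ p.support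

lemma not_isMajor_of_isLeaf {x : V} (hx : isLeaf G x) : ¬ isMajor G x := by
  unfold isLeaf at hx
  unfold isMajor
  omega

lemma Walk.IsPath.length_eq_dist (hG : G.IsAcyclic) {u v : V} {p : G.Walk u v}
    (hp : p.IsPath) : p.length = G.dist u v := by
  obtain ⟨q, hq, hql⟩ := p.reachable.exists_path_of_dist
  have : (⟨p, hp⟩ : G.Path u v) = ⟨q, hq⟩ := (hG.subsingleton_path u v).elim _ _
  rw [← hql, show p = q from congrArg Subtype.val this]

lemma Walk.dist_add_dist_of_mem_support {x y v : V} {p : G.Walk x y}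
    (hp : p.length = G.dist x y) (hv : v ∈ p.support) :
    G.dist x v + G.dist v y = G.dist x y := by
  classical
  have hsplit := congrArg length (p.take_spec hv)
  rw [length_append] at hsplit
  have := dist_le (p.takeUntil v hv)
  have := dist_le (p.dropUntil v hv)
  have := (p.takeUntil v hv).reachable.dist_triangle_left y
  omega

lemma dist_eq_add_of_forall_mem_support {x y w : V} (h : G.Reachable x w)
    (hy : ∀ r : G.Walk x w, y ∈ r.support) : G.dist x w = G.dist x y + G.dist y w :=
  let ⟨r, hr⟩ := h.exists_walk_length_eq_dist
  (r.dist_add_dist_of_mem_support hr (hy r)).symm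

lemma Walk.mem_support_of_neighborSet_subset {S : Set V} {y : V}
    (hS : ∀ v ∈ S, v ≠ y → G.neighborSet v ⊆ S) {u w : V} (r : G.Walk u w) (hu : u ∈ S)
    (hw : w ∉ S) : y ∈ r.support := by
  obtain ⟨d, hd, hfst, hsnd⟩ := r.exists_boundary_dart S hu hw
  by_contra hy
  exact hsnd (hS d.fst hfst (fun h => hy (h ▸ r.dart_fst_mem_support_of_mem_darts hd)) d.adj)

lemma Connected.mem_of_neighborSet_subset (hG : G.Connected) {S : Set V} {u : V} (hu : u ∈ S)
    (hS : ∀ v ∈ S, G.neighborSet v ⊆ S) (w : V) : w ∈ S := by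
  by_contra hw
  obtain ⟨d, -, hfst, hsnd⟩ := (hG.preconnected u w).some.exists_boundary_dart S hu hw
  exact hsnd (hS d.fst hfst d.adj)

lemma Walk.IsPath.getVert_sub_one_ne_getVert_add_one {x y : V} {p : G.Walk x y}
    (hp : p.IsPath) {i : ℕ} (hi : i < p.length) : p.getVert (i - 1) ≠ p.getVert (i + 1) :=
  fun h => by
    have := hp.getVert_injOn (by simp; omega) (by simp; omega) h
    omega

lemma IsTree.isPathGraph_of_forall_mem_support (hG : G.IsTree) {x y : V} {p : G.Walk x y}
    (hp : p.IsPath) (hall : ∀ v, v ∈ p.support) : isPathGraph G := by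
  have hdist (i : ℕ) (hi : i ≤ p.length) : G.dist x (p.getVert i) = i := by
    rw [← (hp.take i).length_eq_dist hG.isAcyclic, take_length]
    omega
  let f : Fin (p.length + 1) → V := fun i => p.getVert i
  have hf : Function.Bijective f := by
    refine ⟨fun i j hij => Fin.ext (hp.getVert_injOn (by simp; omega) (by simp; omega) hij),
      fun v => ?_⟩
    obtain ⟨i, hi, hil⟩ := mem_support_iff_exists_getVert.mp (hall v)
    exact ⟨⟨i, by omega⟩, hi⟩
  refine ⟨p.length + 1, ⟨RelIso.symm ⟨Equiv.ofBijective f hf, fun {i j} => ?_⟩⟩⟩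
  simp only [Equiv.ofBijective_apply, pathGraph_adj, f]
  constructor
  · intro hadj
    have := hdist i (by omega)
    have := hdist j (by omega)
    rcases hG.dist_eq_dist_add_one_of_adj x hadj with h | h <;> omega
  · rintro (h | h)
    · simpa [← h] using p.adj_getVert_succ (i := i) (by omega)
    · simpa [← h] using (p.adj_getVert_succ (i := j) (by omega)).symm

lemma not_isMajor_of_isTerminalOf {u x v : V} (hx : isTerminalOf G u x) {p : G.Walk x u}
    (hp : p.length = G.dist x u) (hv : v ∈ p.support) (hvu : v ≠ u) : ¬ isMajor G v := by
  intro hmaj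
  have hcloser := hx.2.2 v hmaj hvu
  have := p.dist_add_dist_of_mem_support hp hv
  rw [dist_comm, dist_comm (u := v)] at hcloser
  omega

lemma Connected.eq_of_isMajor_of_mem_support (hG : G.Connected) {u x y w : V}
    (hx : isTerminalOf G u x) (hy : isTerminalOf G u y) {q : G.Walk x y}
    (hq : q.length = G.dist x y) (hw : w ∈ q.support) (hmaj : isMajor G w) : w = u := by
  by_contra hwu
  have hxw := hx.2.2 w hmaj hwu
  have hyw := hy.2.2 w hmaj hwu
  have := q.dist_add_dist_of_mem_support hq hw
  have := hG.dist_triangle (u := x) (v := u) (w := y)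
  rw [dist_comm, dist_comm (u := w)] at hxw
  omega

section Finite

variable [Finite V]

lemma Walk.IsPath.neighborSet_getVert_eq {x y : V} {p : G.Walk x y} (hp : p.IsPath) {i : ℕ}
    (hi0 : 0 < i) (hi : i < p.length) (hdeg : (G.neighborSet (p.getVert i)).ncard ≤ 2) :
    G.neighborSet (p.getVert i) = {p.getVert (i - 1), p.getVert (i + 1)} := by
  have hpred : G.Adj (p.getVert i) (p.getVert (i - 1)) := by
    simpa [Nat.sub_add_cancel hi0] using (p.adj_getVert_succ (i := i - 1) (by omega)).symm
  refine (Set.eq_of_subset_of_ncard_le ?_ ?_ (Set.toFinite _)).symm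
  · rintro w (rfl | rfl)
    exacts [hpred, p.adj_getVert_succ hi]
  · rwa [Set.ncard_pair (hp.getVert_sub_one_ne_getVert_add_one hi)]

lemma Walk.IsPath.not_isLeaf_of_mem_support {x y v : V} {p : G.Walk x y} (hp : p.IsPath)
    (hv : v ∈ p.support) (hvx : v ≠ x) (hvy : v ≠ y) : ¬ isLeaf G v := by
  intro hleaf
  obtain ⟨i, rfl, hi⟩ := mem_support_iff_exists_getVert.mp hv
  have hi0 : 0 < i := Nat.pos_of_ne_zero (by rintro rfl; exact hvx p.getVert_zero)
  have hi : i < p.length := lt_of_le_of_ne hi (by rintro rfl; exact hvy p.getVert_length)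
  unfold isLeaf at hleaf
  rw [hp.neighborSet_getVert_eq hi0 hi (by omega),
    Set.ncard_pair (hp.getVert_sub_one_ne_getVert_add_one hi)] at hleaf
  omega

lemma Walk.IsPath.neighborSet_subset_support {x y : V} {p : G.Walk x y} (hp : p.IsPath)
    (hx : isLeaf G x) (hnm : ∀ v ∈ p.support, v ≠ y → ¬ isMajor G v) {v : V}
    (hv : v ∈ p.support) (hvy : v ≠ y) : G.neighborSet v ⊆ {w | w ∈ p.support} := by
  obtain ⟨i, rfl, hi⟩ := mem_support_iff_exists_getVert.mp hv
  have hi : i < p.length := lt_of_le_of_ne hi (by rintro rfl; exact hvy p.getVert_length)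
  rcases Nat.eq_zero_or_pos i with rfl | hi0
  · obtain ⟨c, hc⟩ := Set.ncard_eq_one.mp hx
    have hc1 : p.getVert 1 ∈ G.neighborSet x := by simpa using p.adj_getVert_succ hi
    rw [hc, Set.mem_singleton_iff] at hc1
    rw [getVert_zero, hc, Set.singleton_subset_iff, ← hc1]
    exact p.getVert_mem_support 1
  · have hdeg : (G.neighborSet (p.getVert i)).ncard ≤ 2 := by
      have := hnm _ hv hvy
      unfold isMajor at this
      omega
    rw [hp.neighborSet_getVert_eq hi0 hi hdeg]
    rintro w (rfl | rfl) <;> exact p.getVert_mem_support _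

lemma Connected.dist_eq_add_of_not_mem_support (hG : G.Connected) {x y w : V}
    {p : G.Walk x y} (hp : p.IsPath) (hx : isLeaf G x)
    (hnm : ∀ v ∈ p.support, v ≠ y → ¬ isMajor G v) (hw : w ∉ p.support) :
    G.dist x w = G.dist x y + G.dist y w :=
  dist_eq_add_of_forall_mem_support (hG x w) fun r =>
    r.mem_support_of_neighborSet_subset
      (fun _ hv hvy => hp.neighborSet_subset_support hx hnm hv hvy) p.start_mem_support hw

lemma Connected.isTerminalOf_of_isPath (hG : G.Connected) {x m : V} {p : G.Walk x m}
    (hp : p.IsPath) (hx : isLeaf G x) (hm : isMajor G m)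
    (hnm : ∀ v ∈ p.support, v ≠ m → ¬ isMajor G v) : isTerminalOf G m x := by
  refine ⟨hx, hm, fun w hw hwm => ?_⟩
  have hwp : w ∉ p.support := fun h => hnm w h hwm hw
  have := hG.dist_eq_add_of_not_mem_support hp hx hnm hwp
  have := hG.pos_dist_of_ne hwm.symm
  rw [dist_comm, dist_comm (u := w)]
  omega

lemma two_le_terDeg {u x y : V} (hx : isTerminalOf G u x) (hy : isTerminalOf G u y)
    (hxy : x ≠ y) : 2 ≤ terDeg G u := by
  rw [terDeg, ← Set.ncard_pair hxy]
  exact Set.ncard_le_ncard (by rintro w (rfl | rfl) <;> assumption)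

lemma Connected.dist_eq_add_of_isTerminalOf (hG : G.Connected) {u x y : V}
    (hx : isTerminalOf G u x) (hy : isTerminalOf G u y) (hxy : x ≠ y) :
    G.dist x y = G.dist x u + G.dist u y := by
  obtain ⟨p, hp, hpl⟩ := hG.exists_path_of_dist x u
  have hyu : y ≠ u := fun h => not_isMajor_of_isLeaf hy.1 (h ▸ hy.2.1)
  have hyp : y ∉ p.support := fun h => hp.not_isLeaf_of_mem_support h hxy.symm hyu hy.1
  exact hG.dist_eq_add_of_not_mem_support hp hx.1
    (fun v hv hvu => not_isMajor_of_isTerminalOf hx hpl hv hvu) hyp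

lemma IsTree.isPathGraph_of_isPath (hG : G.IsTree) {x y : V} {p : G.Walk x y} (hp : p.IsPath)
    (hx : isLeaf G x) (hy : isLeaf G y) (hxy : x ≠ y)
    (hnm : ∀ v ∈ p.support, ¬ isMajor G v) : isPathGraph G := by
  have hclosed : ∀ v ∈ {w | w ∈ p.support}, G.neighborSet v ⊆ {w | w ∈ p.support} := by
    intro v hv
    by_cases hvy : v = y
    · subst hvy
      simpa using hp.reverse.neighborSet_subset_support hy
        (fun w hw _ => hnm w (by simpa using hw)) p.reverse.start_mem_support hxy.symm
    · exact hp.neighborSet_subset_support hx (fun w hw _ => hnm w hw) hv hvy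
  exact hG.isPathGraph_of_forall_mem_support hp
    (hG.connected.mem_of_neighborSet_subset p.start_mem_support hclosed)

theorem IsTree.longLeafPathsHaveTwoMajors (hG : G.IsTree) (hnp : ¬ isPathGraph G)
    (hadj : G.TerminalsAdjacent) : G.LongLeafPathsHaveTwoMajors := by
  classical
  intro x y hx hy hd p hp
  have hxy : x ≠ y := by rintro rfl; simp at hd
  by_contra! hno
  by_cases hm : ∃ m ∈ p.support, isMajor G m
  · obtain ⟨m, hmp, hm⟩ := hm
    have hother : ∀ v ∈ p.support, v ≠ m → ¬ isMajor G v :=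
      fun v hv hvm hv' => hno v m hvm hv' hm hv hmp
    have htx := hG.connected.isTerminalOf_of_isPath (hp.takeUntil hmp) hx hm
      fun v hv => hother v (p.support_takeUntil_subset_support hmp hv)
    have hty := hG.connected.isTerminalOf_of_isPath (hp.dropUntil hmp).reverse hy hm
      fun v hv => hother v (p.support_dropUntil_subset_support hmp (by simpa using hv))
    have hxm := hadj m hm (two_le_terDeg htx hty hxy) x htx
    have hym := hadj m hm (two_le_terDeg htx hty hxy) y hty
    have := hG.connected.dist_triangle (u := x) (v := m) (w := y)
    rw [dist_eq_one_iff_adj.mpr hxm.symm, dist_eq_one_iff_adj.mpr hym] at this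
    omega
  · push Not at hm
    exact hnp (hG.isPathGraph_of_isPath hp hx hy hxy hm)

theorem Connected.terminalsAdjacent (hG : G.Connected) (htwo : G.LongLeafPathsHaveTwoMajors) :
    G.TerminalsAdjacent := by
  intro u hu hter x hx
  by_contra hadj
  obtain ⟨y, hy, hyx⟩ := Set.exists_ne_of_one_lt_ncard hter x
  have hxu : 1 < G.dist x u := hG.one_lt_dist_of_ne_of_not_adj
    (by rintro rfl; exact not_isMajor_of_isLeaf hx.1 hu) (fun h => hadj h.symm)
  have huy : 0 < G.dist u y :=
    hG.pos_dist_of_ne (by rintro rfl; exact not_isMajor_of_isLeaf hy.1 hu)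
  have hxy := hG.dist_eq_add_of_isTerminalOf hx hy hyx.symm
  obtain ⟨q, hq, hql⟩ := hG.exists_path_of_dist x y
  obtain ⟨a, b, hab, ha, hb, haq, hbq⟩ := htwo x y hx.1 hy.1 (by omega) q hq
  exact hab ((hG.eq_of_isMajor_of_mem_support hx hy hql haq ha).trans
    (hG.eq_of_isMajor_of_mem_support hx hy hql hbq hb).symm)

end Finite

end SimpleGraph

theorem stmt4_general {V : Type*} [Fintype V] (G : SimpleGraph V)
    (htree : G.IsTree) (hnp : ¬ isPathGraph G) :
    (∀ u : V, isMajor G u → 2 ≤ terDeg G u →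
        ∀ x : V, isTerminalOf G u x → G.Adj u x) ↔
      (∀ x y : V, isLeaf G x → isLeaf G y → 2 < G.dist x y →
        ∀ p : G.Walk x y, p.IsPath →
          ∃ u v : V, u ≠ v ∧ isMajor G u ∧ isMajor G v ∧
            u ∈ p.support ∧ v ∈ p.support) :=
  ⟨htree.longLeafPathsHaveTwoMajors hnp, htree.connected.terminalsAdjacent⟩

theorem stmt4 {V : Type*} [Fintype V] (G : SimpleGraph V)
    (htree : G.IsTree) (hcard : 2 ≤ Fintype.card V) (hnp : ¬ isPathGraph G) :
    (∀ u : V, isMajor G u → 2 ≤ terDeg G u →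
        ∀ x : V, isTerminalOf G u x → G.Adj u x) ↔
      (∀ x y : V, isLeaf G x → isLeaf G y → 2 < G.dist x y →
        ∀ p : G.Walk x y, p.IsPath →
          ∃ u v : V, u ≠ v ∧ isMajor G u ∧ isMajor G v ∧
            u ∈ p.support ∧ v ∈ p.support) :=
  stmt4_general G htree hnp
end

section
/- For the path P_n on n ≥ 2 vertices, γ_M(P_n) = dim(P_n) + γ(P_n) if and only if n = 3. -/
open SimpleGraph

variable {V : Type*}

/-!
In `P_n` the distance is `|i - j|`, so a single vertex resolves exactly when it is an endpoint,
and any two vertices resolve; hence `dim(P_n) = 1`. For `n ≥ 4` no single vertex dominates, so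
every dominating set has two vertices, is therefore resolving, and `γ_M(P_n) = γ(P_n)`.
For `n = 2` an endpoint is an MLD-set, so `γ_M = 1 < 2`. For `n = 3` the only dominating vertex
is the middle one, which does not resolve, so `γ_M = 2 = dim + γ`.
-/

section MinCard

noncomputable def minCard (P : Set V → Prop) : ℕ :=
  sInf {n | ∃ S : Set V, P S ∧ S.ncard = n}

variable {P Q : Set V → Prop}

lemma minCard_le {S : Set V} (hS : P S) : minCard P ≤ S.ncard :=
  Nat.sInf_le ⟨S, hS, rfl⟩

lemma exists_ncard_eq_minCard (h : ∃ S, P S) : ∃ S, P S ∧ S.ncard = minCard P :=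
  let ⟨S, hS⟩ := h
  Nat.sInf_mem (s := {n | ∃ S : Set V, P S ∧ S.ncard = n}) ⟨S.ncard, S, hS, rfl⟩

lemma le_minCard {k : ℕ} (h : ∃ S, P S) (hk : ∀ S, P S → k ≤ S.ncard) :
    k ≤ minCard P := by
  obtain ⟨S, hS, hcard⟩ := exists_ncard_eq_minCard h
  exact hcard ▸ hk S hS

lemma minCard_le_minCard (hPQ : ∀ S, P S → Q S) (h : ∃ S, P S) : minCard Q ≤ minCard P := by
  obtain ⟨S, hS, hcard⟩ := exists_ncard_eq_minCard h
  exact hcard ▸ minCard_le (hPQ S hS)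

end MinCard

section General

variable {G : SimpleGraph V}

lemma metricDim_eq_minCard : metricDim G = minCard (isResolvingSet G) := rfl

lemma domNum_eq_minCard : domNum G = minCard (isDominatingSet G) := rfl

lemma mldNum_eq_minCard : mldNum G = minCard (isMLDSet G) := rfl

lemma not_isResolvingSet_empty [Nontrivial V] : ¬ isResolvingSet G ∅ := by
  obtain ⟨x, y, hxy⟩ := exists_pair_ne V
  intro h
  obtain ⟨u, hu, -⟩ := h x y hxy
  exact hu

lemma nonempty_of_isDominatingSet [Nonempty V] {S : Set V} (hS : isDominatingSet G S) :
    S.Nonempty := by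
  obtain ⟨x⟩ := ‹Nonempty V›
  by_cases hx : x ∈ S
  · exact ⟨x, hx⟩
  · obtain ⟨u, hu, -⟩ := hS x hx
    exact ⟨u, hu⟩

lemma eq_or_adj_of_isDominatingSet_singleton {u : V} (h : isDominatingSet G {u}) (x : V) :
    x = u ∨ G.Adj u x := by
  refine or_iff_not_imp_left.2 fun hx ↦ ?_
  obtain ⟨w, rfl, hadj⟩ := h x hx
  exact hadj

lemma exists_eq_singleton_of_isDominatingSet_of_ncard_le_one [Finite V] [Nonempty V]
    {S : Set V} (hS : isDominatingSet G S) (hcard : S.ncard ≤ 1) : ∃ u, S = {u} :=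
  ((Set.ncard_le_one_iff_eq S.toFinite).1 hcard).resolve_left
    (nonempty_of_isDominatingSet hS).ne_empty

lemma isDominatingSet_univ : isDominatingSet G Set.univ :=
  fun _ hx ↦ absurd trivial hx

lemma isMLDSet_univ (hG : G.Preconnected) : isMLDSet G Set.univ :=
  ⟨fun x y hxy ↦ ⟨x, trivial, by rw [dist_self]; exact ((hG x y).pos_dist_of_ne hxy).ne⟩,
    isDominatingSet_univ⟩

lemma one_le_metricDim [Finite V] [Nontrivial V] (hG : G.Preconnected) : 1 ≤ metricDim G :=
  le_minCard ⟨Set.univ, (isMLDSet_univ hG).1⟩ fun S hS ↦ (Set.ncard_pos S.toFinite).2 <|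
    Set.nonempty_iff_ne_empty.2 fun hS₀ ↦ not_isResolvingSet_empty (hS₀ ▸ hS)

lemma one_le_domNum [Finite V] [Nonempty V] : 1 ≤ domNum G :=
  le_minCard ⟨Set.univ, isDominatingSet_univ⟩
    fun S hS ↦ (Set.ncard_pos S.toFinite).2 (nonempty_of_isDominatingSet hS)

lemma metricDim_le_mldNum (hG : G.Preconnected) : metricDim G ≤ mldNum G :=
  minCard_le_minCard (fun _ hS ↦ hS.1) ⟨Set.univ, isMLDSet_univ hG⟩

lemma domNum_le_mldNum (hG : G.Preconnected) : domNum G ≤ mldNum G :=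
  minCard_le_minCard (fun _ hS ↦ hS.2) ⟨Set.univ, isMLDSet_univ hG⟩

end General

section PathGraph

variable {n : ℕ}

lemma pathGraph_natDist_le_length {i j : Fin n} (w : (pathGraph n).Walk i j) :
    Nat.dist i j ≤ w.length := by
  induction w with
  | nil => simp
  | cons hadj _ ih =>
    rw [pathGraph_adj] at hadj
    simp only [Walk.length_cons, Nat.dist] at ih ⊢
    omega

lemma pathGraph_dist_le_of_add_eq (k : ℕ) {i j : Fin n} (h : i.val + k = j.val) :
    (pathGraph n).dist i j ≤ k := by
  induction k generalizing j with
  | zero => rw [Fin.ext (by omega : i.val = j.val), dist_self]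
  | succ k ih =>
    let j' : Fin n := ⟨j - 1, by omega⟩
    have hadj : (pathGraph n).Adj j' j := pathGraph_adj.2 (Or.inl (by simp only [j']; omega))
    calc (pathGraph n).dist i j ≤ (pathGraph n).dist i j' + (pathGraph n).dist j' j :=
          hadj.reachable.dist_triangle_right i
      _ ≤ k + 1 := by
          rw [dist_eq_one_iff_adj.2 hadj]
          exact Nat.add_le_add_right (ih (by simp only [j']; omega)) 1

lemma pathGraph_dist (i j : Fin n) : (pathGraph n).dist i j = Nat.dist i j := by
  obtain ⟨w, hw⟩ := (pathGraph_preconnected n i j).exists_walk_length_eq_dist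
  refine le_antisymm ?_ (hw ▸ pathGraph_natDist_le_length w)
  rcases le_total i.val j.val with h | h
  · rw [Nat.dist_eq_sub_of_le h]
    exact pathGraph_dist_le_of_add_eq _ (Nat.add_sub_cancel' h)
  · rw [dist_comm, Nat.dist_comm, Nat.dist_eq_sub_of_le h]
    exact pathGraph_dist_le_of_add_eq _ (Nat.add_sub_cancel' h)

lemma pathGraph_isResolvingSet_singleton_zero (hn : 0 < n) :
    isResolvingSet (pathGraph n) {⟨0, hn⟩} := by
  intro x y hxy
  have hxy' : x.val ≠ y.val := Fin.val_ne_of_ne hxy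
  refine ⟨_, rfl, ?_⟩
  simp only [pathGraph_dist, Nat.dist]
  omega

lemma pathGraph_isResolvingSet_of_one_lt_ncard {S : Set (Fin n)} (hS : 1 < S.ncard) :
    isResolvingSet (pathGraph n) S := by
  obtain ⟨u, v, hu, hv, huv⟩ := (Set.one_lt_ncard_iff S.toFinite).1 hS
  intro x y hxy
  have hxy' : x.val ≠ y.val := Fin.val_ne_of_ne hxy
  by_contra! h
  have hux := h u hu
  have hvx := h v hv
  simp only [pathGraph_dist, Nat.dist] at hux hvx
  -- a vertex equidistant from `x ≠ y` is their midpoint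
  exact huv (Fin.ext (by omega))

lemma pathGraph_val_eq_zero_or_add_one_eq_of_isResolvingSet_singleton {u : Fin n}
    (h : isResolvingSet (pathGraph n) {u}) : u.val = 0 ∨ u.val + 1 = n := by
  by_contra! hu
  obtain ⟨w, rfl, hw⟩ := h ⟨u - 1, by omega⟩ ⟨u + 1, by omega⟩ (by simp [Fin.ext_iff])
  simp only [pathGraph_dist, Nat.dist] at hw
  omega

lemma pathGraph_val_le_one_and_le_val_add_two_of_isDominatingSet_singleton {u : Fin n}
    (h : isDominatingSet (pathGraph n) {u}) : u.val ≤ 1 ∧ n ≤ u.val + 2 := by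
  have hu := u.isLt
  have hfirst := eq_or_adj_of_isDominatingSet_singleton h ⟨0, by omega⟩
  have hlast := eq_or_adj_of_isDominatingSet_singleton h ⟨n - 1, by omega⟩
  simp only [pathGraph_adj, Fin.ext_iff] at hfirst hlast
  omega

lemma pathGraph_one_lt_ncard_of_isDominatingSet (hn : 4 ≤ n) {S : Set (Fin n)}
    (hS : isDominatingSet (pathGraph n) S) : 1 < S.ncard := by
  have : Nonempty (Fin n) := ⟨⟨0, by omega⟩⟩
  by_contra! hcard
  obtain ⟨u, rfl⟩ := exists_eq_singleton_of_isDominatingSet_of_ncard_le_one hS hcard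
  have := pathGraph_val_le_one_and_le_val_add_two_of_isDominatingSet_singleton hS
  omega

lemma pathGraph_one_lt_ncard_of_isMLDSet (hn : 3 ≤ n) {S : Set (Fin n)}
    (hS : isMLDSet (pathGraph n) S) : 1 < S.ncard := by
  have : Nonempty (Fin n) := ⟨⟨0, by omega⟩⟩
  by_contra! hcard
  obtain ⟨u, rfl⟩ := exists_eq_singleton_of_isDominatingSet_of_ncard_le_one hS.2 hcard
  have := pathGraph_val_eq_zero_or_add_one_eq_of_isResolvingSet_singleton hS.1
  have := pathGraph_val_le_one_and_le_val_add_two_of_isDominatingSet_singleton hS.2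
  omega

lemma metricDim_pathGraph (hn : 2 ≤ n) : metricDim (pathGraph n) = 1 := by
  have : Nontrivial (Fin n) := Fin.nontrivial_iff_two_le.2 hn
  refine le_antisymm ?_ (one_le_metricDim (pathGraph_preconnected n))
  rw [metricDim_eq_minCard]
  simpa using minCard_le (pathGraph_isResolvingSet_singleton_zero (by omega : 0 < n))

lemma domNum_pathGraph_of_le_three (h2 : 2 ≤ n) (h3 : n ≤ 3) : domNum (pathGraph n) = 1 := by
  have : Nonempty (Fin n) := ⟨⟨0, by omega⟩⟩
  refine le_antisymm ?_ one_le_domNum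
  have hdom : isDominatingSet (pathGraph n) {⟨1, by omega⟩} := by
    intro x hx
    have hx' : x.val ≠ 1 := fun h ↦ hx (Fin.ext h)
    exact ⟨_, rfl, pathGraph_adj.2 (by have := x.isLt; simp only; omega)⟩
  rw [domNum_eq_minCard]
  simpa using minCard_le hdom

lemma mldNum_pathGraph_of_four_le (hn : 4 ≤ n) : mldNum (pathGraph n) = domNum (pathGraph n) :=
  le_antisymm
    (minCard_le_minCard
      (fun _ hS ↦ ⟨pathGraph_isResolvingSet_of_one_lt_ncard
        (pathGraph_one_lt_ncard_of_isDominatingSet hn hS), hS⟩)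
      ⟨Set.univ, isDominatingSet_univ⟩)
    (domNum_le_mldNum (pathGraph_preconnected n))

lemma mldNum_pathGraph_two : mldNum (pathGraph 2) = 1 := by
  refine le_antisymm ?_ ((metricDim_pathGraph le_rfl).symm.trans_le
    (metricDim_le_mldNum (pathGraph_preconnected 2)))
  have hdom : isDominatingSet (pathGraph 2) {0} := fun x hx ↦
    ⟨0, rfl, by fin_cases x <;> simp_all [pathGraph_adj]⟩
  rw [mldNum_eq_minCard]
  simpa using minCard_le (P := isMLDSet (pathGraph 2))
    ⟨pathGraph_isResolvingSet_singleton_zero (by norm_num), hdom⟩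

lemma mldNum_pathGraph_three : mldNum (pathGraph 3) = 2 := by
  refine le_antisymm ?_ (le_minCard ⟨Set.univ, isMLDSet_univ (pathGraph_preconnected 3)⟩
    fun _ hS ↦ pathGraph_one_lt_ncard_of_isMLDSet le_rfl hS)
  have hcard : ({0, 1} : Set (Fin 3)).ncard = 2 := Set.ncard_pair (by decide)
  have hdom : isDominatingSet (pathGraph 3) {0, 1} := fun x hx ↦
    ⟨1, by simp, by fin_cases x <;> simp_all [pathGraph_adj]⟩
  exact hcard ▸ minCard_le (P := isMLDSet (pathGraph 3))
    ⟨pathGraph_isResolvingSet_of_one_lt_ncard (by omega), hdom⟩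

end PathGraph

theorem stmt6 (n : ℕ) (hn : 2 ≤ n) :
    mldNum (SimpleGraph.pathGraph n) =
        metricDim (SimpleGraph.pathGraph n) + domNum (SimpleGraph.pathGraph n) ↔
      n = 3 := by
  rw [metricDim_pathGraph hn]
  obtain rfl | rfl | h4 : n = 2 ∨ n = 3 ∨ 4 ≤ n := by omega
  · simp [mldNum_pathGraph_two, domNum_pathGraph_of_le_three le_rfl (by norm_num)]
  · simp [mldNum_pathGraph_three, domNum_pathGraph_of_le_three (by norm_num) le_rfl]
  · rw [mldNum_pathGraph_of_four_le h4]
    omega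
end

section
/- Let T be a finite tree of order at least 2 different from the path P_2. Then γ(T) = |S(T)| if and only if for every vertex u of T there exists a leaf at distance at most 2 from u. -/
open SimpleGraph

variable {V : Type*}

/-!
Replacing every leaf of a dominating set `D` by its support vertex yields a dominating set of
size at most `|D|`; when no two leaves are adjacent (in a connected graph other than `P₂`) it
contains every support vertex. Hence `γ ≥ |S|`, with equality exactly when `S` itself dominates,
and a vertex is dominated by `S` iff it lies within distance 2 of a leaf.
-/

open Set

section

variable {G : SimpleGraph V}

theorem isLeaf.exists_adj {x : V} (hx : isLeaf G x) : ∃ s, G.Adj x s := by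
  obtain ⟨s, hs⟩ := ncard_eq_one.mp hx
  exact ⟨s, (G.mem_neighborSet x s).mp (hs ▸ mem_singleton s)⟩

theorem isLeaf.eq_of_adj {x y z : V} (hx : isLeaf G x) (hy : G.Adj x y) (hz : G.Adj x z) :
    y = z := by
  obtain ⟨s, hs⟩ := ncard_eq_one.mp hx
  have hy' : y ∈ G.neighborSet x := hy
  have hz' : z ∈ G.neighborSet x := hz
  rw [hs, mem_singleton_iff] at hy' hz'
  exact hy'.trans hz'.symm

open Classical in
noncomputable def toSupport (G : SimpleGraph V) (v : V) : V :=
  if h : ∃ s, isLeaf G v ∧ G.Adj v s then h.choose else v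

theorem toSupport_of_not_isLeaf {v : V} (hv : ¬ isLeaf G v) : toSupport G v = v :=
  dif_neg fun ⟨_, hl, _⟩ => hv hl

theorem isLeaf.adj_toSupport {v : V} (hv : isLeaf G v) : G.Adj v (toSupport G v) := by
  obtain ⟨s, hs⟩ := hv.exists_adj
  have h : ∃ s, isLeaf G v ∧ G.Adj v s := ⟨s, hv, hs⟩
  rw [toSupport, dif_pos h]
  exact h.choose_spec.2

theorem isLeaf.eq_toSupport {v s : V} (hv : isLeaf G v) (hs : G.Adj v s) : s = toSupport G v :=
  hv.eq_of_adj hs hv.adj_toSupport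

theorem isDominatingSet.image_toSupport {D : Set V} (hD : isDominatingSet G D) :
    isDominatingSet G (toSupport G '' D) := by
  intro v hv
  by_cases hvD : v ∈ D
  · have hvl : isLeaf G v := by
      by_contra hvl
      exact hv ⟨v, hvD, toSupport_of_not_isLeaf hvl⟩
    exact ⟨toSupport G v, mem_image_of_mem _ hvD, hvl.adj_toSupport.symm⟩
  · obtain ⟨d, hdD, hdv⟩ := hD v hvD
    have hdl : ¬ isLeaf G d := fun hdl => hv ⟨d, hdD, (hdl.eq_toSupport hdv).symm⟩
    exact ⟨d, ⟨d, hdD, toSupport_of_not_isLeaf hdl⟩, hdv⟩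

theorem setOf_isSupport_subset_image_toSupport (hL : ∀ x, isLeaf G x → ¬ isSupport G x)
    {D : Set V} (hD : isDominatingSet G D) : {u | isSupport G u} ⊆ toSupport G '' D := by
  rintro u ⟨x, hx, hux⟩
  by_cases hxD : x ∈ D
  · exact ⟨x, hxD, (hx.eq_toSupport hux.symm).symm⟩
  · obtain ⟨d, hdD, hdx⟩ := hD x hxD
    obtain rfl : d = u := hx.eq_of_adj hdx.symm hux.symm
    exact ⟨d, hdD, toSupport_of_not_isLeaf fun hd => hL d hd ⟨x, hx, hux⟩⟩

theorem ncard_setOf_isSupport_le [Finite V] (hL : ∀ x, isLeaf G x → ¬ isSupport G x)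
    {D : Set V} (hD : isDominatingSet G D) : {u | isSupport G u}.ncard ≤ D.ncard :=
  (ncard_le_ncard (setOf_isSupport_subset_image_toSupport hL hD) (toFinite _)).trans
    (ncard_image_le (toFinite D))

theorem isDominatingSet_setOf_isSupport_of_ncard_le [Finite V]
    (hL : ∀ x, isLeaf G x → ¬ isSupport G x) {D : Set V} (hD : isDominatingSet G D)
    (hcard : D.ncard ≤ {u | isSupport G u}.ncard) : isDominatingSet G {u | isSupport G u} := by
  rw [eq_of_subset_of_ncard_le (setOf_isSupport_subset_image_toSupport hL hD)
    ((ncard_image_le (toFinite D)).trans hcard) (toFinite _)]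
  exact hD.image_toSupport

theorem exists_isDominatingSet_ncard_eq_domNum (G : SimpleGraph V) :
    ∃ D : Set V, isDominatingSet G D ∧ D.ncard = domNum G :=
  Nat.sInf_mem (s := {n | ∃ S : Set V, isDominatingSet G S ∧ S.ncard = n})
    ⟨_, univ, fun x hx => absurd (mem_univ x) hx, rfl⟩

theorem domNum_eq_ncard_setOf_isSupport_iff [Finite V] (hL : ∀ x, isLeaf G x → ¬ isSupport G x) :
    domNum G = {u | isSupport G u}.ncard ↔ isDominatingSet G {u | isSupport G u} := by
  obtain ⟨D, hD, hDcard⟩ := exists_isDominatingSet_ncard_eq_domNum G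
  constructor
  · intro h
    exact isDominatingSet_setOf_isSupport_of_ncard_le hL hD (hDcard.trans h).le
  · intro hS
    exact le_antisymm (Nat.sInf_le ⟨_, hS, rfl⟩) (hDcard ▸ ncard_setOf_isSupport_le hL hD)

theorem isDominatingSet_setOf_isSupport_iff (hc : G.Connected) :
    isDominatingSet G {u | isSupport G u} ↔ ∀ u : V, ∃ x : V, isLeaf G x ∧ G.dist u x ≤ 2 := by
  constructor
  · intro hS u
    by_cases hu : isLeaf G u
    · exact ⟨u, hu, by simp⟩
    by_cases hus : isSupport G u
    · obtain ⟨x, hx, hux⟩ := hus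
      exact ⟨x, hx, (dist_le hux.toWalk).trans (by simp)⟩
    · obtain ⟨s, ⟨x, hx, hsx⟩, hsu⟩ := hS u hus
      exact ⟨x, hx, (dist_le (Walk.cons hsu.symm hsx.toWalk)).trans (by simp)⟩
  · intro h v hv
    obtain ⟨x, hx, hvx⟩ := h v
    obtain ⟨p, hp⟩ := (hc.preconnected v x).exists_walk_length_eq_dist
    match p, hp ▸ hvx with
    | .nil, _ => exact ⟨_, ⟨v, hx, hx.adj_toSupport.symm⟩, hx.adj_toSupport.symm⟩
    | .cons h .nil, _ => exact absurd ⟨x, hx, h⟩ hv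
    | .cons h (.cons h' .nil), _ => exact ⟨_, ⟨x, hx, h'⟩, h.symm⟩

theorem eq_or_eq_of_adj_of_isLeaf (hc : G.Connected) {x y : V} (hx : isLeaf G x)
    (hy : isLeaf G y) (hxy : G.Adj x y) (v : V) : v = x ∨ v = y := by
  by_contra hv
  obtain ⟨d, -, hd, hd'⟩ := (hc.preconnected x v).some.exists_boundary_dart {x, y}
    (mem_insert x _) hv
  rcases hd with hd | hd
  · exact hd' (Or.inr (hx.eq_of_adj (hd ▸ d.adj) hxy))
  · exact hd' (Or.inl (hy.eq_of_adj (hd ▸ d.adj) hxy.symm))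

theorem nonempty_iso_pathGraph_two_of_adj {x y : V} (hxy : G.Adj x y)
    (hV : ∀ v, v = x ∨ v = y) : Nonempty (G ≃g pathGraph 2) := by
  have hcard : Nat.card V = 2 :=
    Nat.card_eq_two_iff.mpr ⟨x, y, hxy.ne, eq_univ_of_forall fun v => hV v⟩
  have : Finite V := Nat.finite_of_card_ne_zero (by omega)
  have htop : G = ⊤ := by
    ext a b
    refine ⟨Adj.ne, fun hab => ?_⟩
    rcases hV a with rfl | rfl <;> rcases hV b with rfl | rfl
    exacts [absurd rfl hab, hxy, hxy.symm, absurd rfl hab]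
  rw [htop, pathGraph_two_eq_top]
  exact ⟨Iso.completeGraph (Finite.equivFinOfCardEq hcard)⟩

/-- Two adjacent leaves of a connected graph are all of it. -/
theorem isLeaf.not_isSupport (hc : G.Connected) (hG : ¬ Nonempty (G ≃g pathGraph 2)) {x : V}
    (hx : isLeaf G x) : ¬ isSupport G x := by
  rintro ⟨y, hy, hxy⟩
  exact hG (nonempty_iso_pathGraph_two_of_adj hxy (eq_or_eq_of_adj_of_isLeaf hc hx hy hxy))

end

theorem stmt8_general {V : Type*} [Fintype V] (G : SimpleGraph V)
    (htree : G.IsTree)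
    (hnp2 : ¬ Nonempty (G ≃g SimpleGraph.pathGraph 2)) :
    domNum G = {u : V | isSupport G u}.ncard ↔
      ∀ u : V, ∃ x : V, isLeaf G x ∧ G.dist u x ≤ 2 :=
  (domNum_eq_ncard_setOf_isSupport_iff fun _ hx => hx.not_isSupport htree.connected hnp2).trans
    (isDominatingSet_setOf_isSupport_iff htree.connected)

theorem stmt8 {V : Type*} [Fintype V] (G : SimpleGraph V)
    (htree : G.IsTree) (hcard : 2 ≤ Fintype.card V)
    (hnp2 : ¬ Nonempty (G ≃g SimpleGraph.pathGraph 2)) :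
    domNum G = {u : V | isSupport G u}.ncard ↔
      ∀ u : V, ∃ x : V, isLeaf G x ∧ G.dist u x ≤ 2 :=
  stmt8_general G htree hnp2
end

section
/- Let G be a finite simple connected graph of order at least 2 containing no cycle of length 4 and no cycle of length 6 as a subgraph. For every MLD-set S ⊆ V(G), the set S ∪ π(S) is a locating-dominating set of G, where π(S) = ∪_{u,v ∈ S} π(u,v) and, for distinct u,v ∈ S, π(u,v) = {u',v'} if there exists a path (u,u',v',v) of length 3 in G (such a path is unique under the C4- and C6-free hypothesis) and π(u,v) = ∅ otherwise. Consequently, γ_L(G) ≤ γ_M(G)². -/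
open SimpleGraph

variable {V : Type*}

/-- the set `π(S)`: for each pair `u ≠ v` of vertices of `S` joined by a
path `(u, u', v', v)` of length 3, it collects the two inner vertices `u', v'`. -/
def piSet (G : SimpleGraph V) (S : Set V) : Set V :=
  {w | ∃ u ∈ S, ∃ v ∈ S, ∃ u' v' : V, u ≠ v ∧ u ≠ v' ∧ u' ≠ v ∧
    G.Adj u u' ∧ G.Adj u' v' ∧ G.Adj v' v ∧ (w = u' ∨ w = v')}

/-!
Write `T = S ∪ π*(S)`, where `π*(S)` keeps the vertices of `π(S)` with at most one neighbour
in `S`. If `x, y ∉ T` had the same neighbours in `T`, a vertex `u ∈ S` dominating `x` is also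
adjacent to `y`, and by `C₄`-freeness it is their only neighbour in `T`. Then every `w ∈ S` lies
at distance `d(w, u) + 1` from both `x` and `y`: otherwise a shortest path from `w` enters `x`
(or `y`) through a neighbour `p ≠ u`, and following it back one more step and dominating yields
a path `(t, r, p, u)` with `t, u ∈ S`, putting `p` into `π*(S) ⊆ T`. So `S` does not resolve `x`
and `y`.

Each vertex of `π*(S)` is the second vertex of a path of length 3 joining an ordered pair of
distinct vertices of `S`, and `C₄`- and `C₆`-freeness make it unique for the pair, so
`|π*(S)| ≤ |S|² - |S|`. The pruning is needed: in two triangles `u a₂ a₁` and `a₁ b₁ v` sharing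
`a₁`, the paths `(u, a₁, b₁, v)` and `(u, a₂, a₁, v)` put three vertices into `π(u, v)`.
-/

section

variable {G : SimpleGraph V}

lemma common_neighbor_unique (h4 : ∀ (x : V) (c : G.Walk x x), c.IsCycle → c.length ≠ 4)
    {a b c d : V} (hac : a ≠ c) (hab : G.Adj a b) (hbc : G.Adj b c) (had : G.Adj a d)
    (hdc : G.Adj d c) : b = d := by
  by_contra hbd
  refine h4 a (.cons hab (.cons hbc (.cons hdc.symm (.cons had.symm .nil)))) ?_ rfl
  simp only [Walk.cons_isCycle_iff, Walk.cons_isPath_iff, Walk.IsPath.nil,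
    Walk.support_cons, Walk.support_nil, Walk.edges_cons, Walk.edges_nil, List.mem_cons,
    List.not_mem_nil, Sym2.eq_iff]
  grind [SimpleGraph.Adj.ne]

lemma false_of_six_cycle (h6 : ∀ (x : V) (c : G.Walk x x), c.IsCycle → c.length ≠ 6)
    {a b c d e f : V} (hab : G.Adj a b) (hbc : G.Adj b c) (hcd : G.Adj c d)
    (hde : G.Adj d e) (hef : G.Adj e f) (hfa : G.Adj f a)
    (hac : a ≠ c) (had : a ≠ d) (hae : a ≠ e) (hbd : b ≠ d) (hbe : b ≠ e) (hbf : b ≠ f)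
    (hce : c ≠ e) (hcf : c ≠ f) (hdf : d ≠ f) : False := by
  refine h6 a (.cons hab (.cons hbc (.cons hcd (.cons hde (.cons hef (.cons hfa .nil)))))) ?_ rfl
  simp only [Walk.cons_isCycle_iff, Walk.cons_isPath_iff, Walk.IsPath.nil,
    Walk.support_cons, Walk.support_nil, Walk.edges_cons, Walk.edges_nil, List.mem_cons,
    List.not_mem_nil, Sym2.eq_iff]
  grind [SimpleGraph.Adj.ne]

lemma SimpleGraph.Connected.exists_adj_dist_add_one_eq (hconn : G.Connected) {w v : V}
    (hne : w ≠ v) : ∃ p, G.Adj p v ∧ G.dist w p + 1 = G.dist w v := by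
  obtain ⟨q, hq⟩ := hconn.exists_walk_length_eq_dist w v
  have hq_nil : ¬q.Nil := fun h => hne h.eq
  refine ⟨q.penultimate, q.adj_penultimate hq_nil, le_antisymm ?_ ?_⟩
  · have := Walk.length_dropLast_add_one hq_nil
    have := dist_le q.dropLast
    omega
  · have := hconn.dist_triangle (u := w) (v := q.penultimate) (w := v)
    rw [dist_eq_one_iff_adj.mpr (q.adj_penultimate hq_nil)] at this
    exact this

lemma SimpleGraph.Adj.dist_le_dist_add_one {u v w : V} (h : G.Adj v w) :
    G.dist u w ≤ G.dist u v + 1 := by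
  rcases h.diff_dist_adj (u := u) with h | h | h <;> omega

lemma isDominatingSet.mono {S T : Set V} (h : isDominatingSet G S) (hST : S ⊆ T) :
    isDominatingSet G T := fun x hx =>
  let ⟨u, hu, hux⟩ := h x (fun hxS => hx (hST hxS))
  ⟨u, hST hu, hux⟩

lemma isLDSet.mono {S T : Set V} (h : isLDSet G S) (hST : S ⊆ T) : isLDSet G T := by
  refine ⟨h.1.mono hST, fun x hx y hy hxy hEq => h.2 x (fun h => hx (hST h)) y
    (fun h => hy (hST h)) hxy ?_⟩
  have := congrArg (· ∩ S) hEq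
  simpa only [Set.inter_assoc, Set.inter_eq_right.mpr hST] using this

lemma isMLDSet_univ_s11 (hconn : G.Connected) : isMLDSet G Set.univ :=
  ⟨fun x _ hxy => ⟨x, trivial, by rw [dist_self]; exact (hconn.pos_dist_of_ne hxy).ne⟩,
    fun _ hx => absurd trivial hx⟩

def prunedPiSet (G : SimpleGraph V) (S : Set V) : Set V :=
  {w | w ∈ piSet G S ∧ (G.neighborSet w ∩ S).Subsingleton}

lemma prunedPiSet_subset_piSet (G : SimpleGraph V) (S : Set V) : prunedPiSet G S ⊆ piSet G S :=
  fun _ hw => hw.1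

section Locating

variable {S : Set V} {u v : V}

lemma neighborSet_inter_subset_of_adj (huS : u ∈ S) (huv : G.Adj u v)
    (hvT : v ∉ S ∪ prunedPiSet G S) (hv : G.neighborSet v ∩ (S ∪ prunedPiSet G S) ⊆ {u})
    {p : V} (hpv : G.Adj p v) (hpu : p ≠ u) : G.neighborSet p ∩ S ⊆ {u} := by
  rintro t ⟨htp, htS⟩
  by_contra htu
  have hvS : v ∉ S := fun h => hvT (Or.inl h)
  have hv_sub : (G.neighborSet v ∩ S).Subsingleton :=
    Set.subsingleton_singleton.anti
      (subset_trans (Set.inter_subset_inter_right _ Set.subset_union_left) hv)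
  exact hvT (Or.inr ⟨⟨t, htS, u, huS, p, v, htu, fun h => hvS (h ▸ htS), hpu, htp.symm, hpv,
    huv.symm, Or.inr rfl⟩, hv_sub⟩)

lemma dist_eq_dist_add_one_of_neighborSet_inter_subset (hconn : G.Connected)
    (hdom : isDominatingSet G S) (huS : u ∈ S) (huv : G.Adj u v)
    (hvT : v ∉ S ∪ prunedPiSet G S) (hv : G.neighborSet v ∩ (S ∪ prunedPiSet G S) ⊆ {u})
    {w : V} (hwS : w ∈ S) : G.dist w v = G.dist w u + 1 := by
  have hvS : v ∉ S := fun h => hvT (Or.inl h)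
  suffices G.dist w u + 1 ≤ G.dist w v from le_antisymm huv.dist_le_dist_add_one this
  obtain ⟨p, hpv, hdp⟩ := hconn.exists_adj_dist_add_one_eq (fun h : w = v => hvS (h ▸ hwS))
  by_cases hpu : p = u
  · rw [← hpu, hdp]
  have hpS := neighborSet_inter_subset_of_adj huS huv hvT hv hpv hpu
  have hpnS : p ∉ S := fun h => hpu (hv ⟨hpv.symm, Or.inl h⟩)
  have hup : G.Adj u p := by
    obtain ⟨t, htS, htp⟩ := hdom p hpnS
    rwa [← hpS ⟨htp.symm, htS⟩]
  obtain ⟨r, hrp, hdr⟩ := hconn.exists_adj_dist_add_one_eq (fun h : w = p => hpnS (h ▸ hwS))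
  have hrS : r ∉ S := by
    intro hr
    have hru : r = u := hpS ⟨hrp.symm, hr⟩
    have := huv.dist_le_dist_add_one (u := w)
    rw [hru] at hdr
    omega
  obtain ⟨t, htS, htr⟩ := hdom r hrS
  by_cases htu : t = u
  · have := htr.symm.dist_le_dist_add_one (u := w)
    rw [htu] at this
    omega
  · have hpT : p ∈ prunedPiSet G S :=
      ⟨⟨t, htS, u, huS, r, p, htu, fun h => hpnS (h ▸ htS), fun h => hrS (h ▸ huS), htr, hrp,
        hup.symm, Or.inr rfl⟩, Set.subsingleton_singleton.anti hpS⟩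
    exact absurd (hv ⟨hpv.symm, Or.inr hpT⟩) hpu

lemma isLDSet_union_prunedPiSet (hconn : G.Connected)
    (h4 : ∀ (x : V) (c : G.Walk x x), c.IsCycle → c.length ≠ 4) (hS : isMLDSet G S) :
    isLDSet G (S ∪ prunedPiSet G S) := by
  obtain ⟨hres, hdom⟩ := hS
  refine ⟨hdom.mono Set.subset_union_left, fun x hxT y hyT hxy hEq => ?_⟩
  obtain ⟨u, huS, hux⟩ := hdom x (fun h => hxT (Or.inl h))
  have huy : G.Adj u y := by
    have hu : u ∈ G.neighborSet x ∩ (S ∪ prunedPiSet G S) := ⟨hux.symm, Or.inl huS⟩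
    exact (hEq ▸ hu).1.symm
  have hx : G.neighborSet x ∩ (S ∪ prunedPiSet G S) ⊆ {u} := fun t ht =>
    common_neighbor_unique h4 hxy ht.1 (hEq ▸ ht).1.symm hux.symm huy
  obtain ⟨w, hwS, hw⟩ := hres x y hxy
  have hwx := dist_eq_dist_add_one_of_neighborSet_inter_subset hconn hdom huS hux hxT hx hwS
  have hwy :=
    dist_eq_dist_add_one_of_neighborSet_inter_subset hconn hdom huS huy hyT (hEq ▸ hx) hwS
  exact hw (hwx.trans hwy.symm)

end Locating

lemma eq_of_three_paths (h4 : ∀ (x : V) (c : G.Walk x x), c.IsCycle → c.length ≠ 4)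
    (h6 : ∀ (x : V) (c : G.Walk x x), c.IsCycle → c.length ≠ 6) {u v a₁ b₁ a₂ b₂ : V}
    (huv : u ≠ v) (hua₁ : G.Adj u a₁) (hab₁ : G.Adj a₁ b₁) (hbv₁ : G.Adj b₁ v)
    (hua₂ : G.Adj u a₂) (hab₂ : G.Adj a₂ b₂) (hbv₂ : G.Adj b₂ v)
    (hub₁ : u ≠ b₁) (hub₂ : u ≠ b₂) (hav₁ : a₁ ≠ v) (hav₂ : a₂ ≠ v)
    (hnav₁ : ¬G.Adj a₁ v) (hnav₂ : ¬G.Adj a₂ v) : a₁ = a₂ := by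
  by_contra hne
  by_cases hb : b₁ = b₂
  · subst hb
    exact hne (common_neighbor_unique h4 hub₁ hua₁ hab₁ hua₂ hab₂)
  · exact false_of_six_cycle h6 hua₁ hab₁ hbv₁ hbv₂.symm hab₂.symm hua₂.symm hub₁ huv hub₂ hav₁
      (fun h => hnav₁ (h ▸ hbv₂)) hne hb (fun h => hnav₂ (h ▸ hbv₁)) hav₂.symm

lemma ncard_prunedPiSet_le [Finite V]
    (h4 : ∀ (x : V) (c : G.Walk x x), c.IsCycle → c.length ≠ 4)
    (h6 : ∀ (x : V) (c : G.Walk x x), c.IsCycle → c.length ≠ 6) (S : Set V) :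
    (prunedPiSet G S).ncard ≤ S.ncard * S.ncard - S.ncard := by
  classical
  have := Fintype.ofFinite V
  let IsSecond (w : V) (e : V × V) : Prop :=
    G.Adj e.1 w ∧ ∃ b, G.Adj w b ∧ G.Adj b e.2 ∧ e.1 ≠ b ∧ w ≠ e.2
  rw [Set.ncard_eq_toFinset_card', Set.ncard_eq_toFinset_card', ← Finset.offDiag_card]
  refine Finset.card_le_card_of_forall_subsingleton IsSecond ?_ ?_
  · simp only [Set.mem_toFinset]
    rintro w ⟨⟨u, huS, v, hvS, a, b, huv, hub, hav, hua, hab, hbv, rfl | rfl⟩, -⟩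
    · exact ⟨(u, v), Finset.mem_offDiag.mpr ⟨by simpa, by simpa, huv⟩, hua, b, hab, hbv, hub, hav⟩
    · exact ⟨(v, u), Finset.mem_offDiag.mpr ⟨by simpa, by simpa, huv.symm⟩, hbv.symm, a,
        hab.symm, hua.symm, hav.symm, hub.symm⟩
  · rintro ⟨u, v⟩ huv w₁ ⟨hw₁, hu₁, b₁, hb₁, hbv₁, hub₁, hwv₁⟩
      w₂ ⟨hw₂, hu₂, b₂, hb₂, hbv₂, hub₂, hwv₂⟩
    simp only [Finset.mem_offDiag, Set.mem_toFinset] at huv hw₁ hw₂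
    have hnv {w : V} (hw : w ∈ prunedPiSet G S) (hu : G.Adj u w) : ¬G.Adj w v := fun hv =>
      huv.2.2 (hw.2 ⟨hu.symm, huv.1⟩ ⟨hv, huv.2.1⟩)
    exact eq_of_three_paths h4 h6 huv.2.2 hu₁ hb₁ hbv₁ hu₂ hb₂ hbv₂ hub₁ hub₂ hwv₁ hwv₂
      (hnv hw₁ hu₁) (hnv hw₂ hu₂)

lemma ncard_union_prunedPiSet_le [Finite V]
    (h4 : ∀ (x : V) (c : G.Walk x x), c.IsCycle → c.length ≠ 4)
    (h6 : ∀ (x : V) (c : G.Walk x x), c.IsCycle → c.length ≠ 6) (S : Set V) :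
    (S ∪ prunedPiSet G S).ncard ≤ S.ncard ^ 2 :=
  calc (S ∪ prunedPiSet G S).ncard
      ≤ S.ncard + (S.ncard * S.ncard - S.ncard) :=
        (Set.ncard_union_le _ _).trans (by gcongr; exact ncard_prunedPiSet_le h4 h6 S)
    _ = S.ncard ^ 2 := by rw [Nat.add_sub_cancel' (Nat.le_mul_self _), sq]

end

theorem stmt11_general {V : Type*} [Fintype V] (G : SimpleGraph V)
    (hconn : G.Connected)
    (hC4C6 : ∀ (x : V) (c : G.Walk x x), c.IsCycle → c.length ≠ 4 ∧ c.length ≠ 6) :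
    (∀ S : Set V, isMLDSet G S → isLDSet G (S ∪ piSet G S)) ∧
      ldNum G ≤ mldNum G ^ 2 := by
  have h4 x c hc := (hC4C6 x c hc).1
  have h6 x c hc := (hC4C6 x c hc).2
  refine ⟨fun S hS => (isLDSet_union_prunedPiSet hconn h4 hS).mono
    (Set.union_subset_union_right S (prunedPiSet_subset_piSet G S)), ?_⟩
  obtain ⟨S, hS, hS_card⟩ : mldNum G ∈ {n | ∃ S : Set V, isMLDSet G S ∧ S.ncard = n} :=
    Nat.sInf_mem ⟨_, Set.univ, isMLDSet_univ_s11 hconn, rfl⟩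
  calc ldNum G ≤ (S ∪ prunedPiSet G S).ncard :=
        Nat.sInf_le ⟨_, isLDSet_union_prunedPiSet hconn h4 hS, rfl⟩
    _ ≤ mldNum G ^ 2 := hS_card ▸ ncard_union_prunedPiSet_le h4 h6 S

theorem stmt11 {V : Type*} [Fintype V] (G : SimpleGraph V)
    (hconn : G.Connected) (hcard : 2 ≤ Fintype.card V)
    (hC4C6 : ∀ (x : V) (c : G.Walk x x), c.IsCycle → c.length ≠ 4 ∧ c.length ≠ 6) :
    (∀ S : Set V, isMLDSet G S → isLDSet G (S ∪ piSet G S)) ∧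
      ldNum G ≤ mldNum G ^ 2 :=
  stmt11_general G hconn hC4C6
end

section
/- For every positive integer s, the graph G_s satisfies γ_M(G_s) ≤ s + 3 and γ_L(G_s) ≥ 2^{s+1} − 1; consequently γ_L(G_s) ≥ 2^{γ_M(G_s) − 2} − 1. -/
open SimpleGraph

variable {V : Type*}

/-- the vertex set of the graph `G_s`: `none` is the vertex `p`,
`some (Sum.inl i)` is `a_i`, `some (Sum.inr (Sum.inl i))` is `b_i`, and
`some (Sum.inr (Sum.inr j))` is `c_j`. -/
abbrev GsV (s : ℕ) : Type :=
  Option (Fin (2 ^ (s + 1)) ⊕ (Fin (2 ^ (s + 1)) ⊕ Fin (s + 1)))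

/-- the defining relation of the graph `G_s`: `p a_i` and `a_i b_i` for every `i`,
and `b_i c_j` whenever the binary representation of `i` has a 1 in position `j`. -/
def GsRel (s : ℕ) : GsV s → GsV s → Prop := fun x y =>
  match x, y with
  | none, some (Sum.inl _) => True
  | some (Sum.inl i), some (Sum.inr (Sum.inl i')) => i = i'
  | some (Sum.inr (Sum.inl i)), some (Sum.inr (Sum.inr j)) =>
      Nat.testBit i.val j.val = true
  | _, _ => False

/-- the graph `G_s`. -/
def Gs (s : ℕ) : SimpleGraph (GsV s) := SimpleGraph.fromRel (GsRel s)

/-!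
The distance from `p` is `0, 1, 2, 3` on `p`, `A`, `B`, `C` respectively, which separates the four
layers. Within `A` and `B`, `c_j` is at distance `2` (rather than `4`) from `a_i`, and at distance `1`
from `b_i`, exactly when bit `j` of `i` is `1`; so `{p} ∪ C` resolves `G_s`, and adding `b_0` makes
it dominating, since every other `b_i` has a neighbour in `C`. Conversely, `N(a_i) = {p, b_i}`, so a
locating-dominating set can miss both `a_i` and `b_i` for at most one `i`.
-/

section Distance

variable {V : Type*} {G : SimpleGraph V}

theorem SimpleGraph.Walk.le_add_length_of_lipschitz (f : V → ℕ)
    (hf : ∀ x y, G.Adj x y → f y ≤ f x + 1) {u v : V} (w : G.Walk u v) :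
    f v ≤ f u + w.length := by
  induction w with
  | nil => simp
  | cons h _ ih =>
    rw [Walk.length_cons]
    linarith [hf _ _ h]

theorem SimpleGraph.exists_walk_length_eq_of_descent (f : V → ℕ) {u : V} (hu : f u = 0)
    (hdesc : ∀ v, v ≠ u → ∃ w, G.Adj w v ∧ f w + 1 = f v) (v : V) :
    ∃ w : G.Walk u v, w.length = f v := by
  induction hn : f v generalizing v with
  | zero =>
    by_cases hv : v = u
    · subst hv
      exact ⟨Walk.nil, rfl⟩
    · obtain ⟨w, -, hw⟩ := hdesc v hv
      omega
  | succ n ih =>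
    have hv : v ≠ u := by rintro rfl; omega
    obtain ⟨w, hwv, hw⟩ := hdesc v hv
    obtain ⟨q, hq⟩ := ih w (by omega)
    exact ⟨q.concat hwv, by rw [Walk.length_concat, hq]⟩

theorem SimpleGraph.dist_eq_of_lipschitz_of_descent (f : V → ℕ)
    (hf : ∀ x y, G.Adj x y → f y ≤ f x + 1) {u : V} (hu : f u = 0)
    (hdesc : ∀ v, v ≠ u → ∃ w, G.Adj w v ∧ f w + 1 = f v) (v : V) :
    G.dist u v = f v := by
  obtain ⟨w, hw⟩ := exists_walk_length_eq_of_descent f hu hdesc v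
  obtain ⟨q, hq⟩ := w.reachable.exists_walk_length_eq_dist
  have hle := q.le_add_length_of_lipschitz f hf
  have hge := dist_le w
  omega

end Distance

theorem mldNum_le_ncard {V : Type*} {G : SimpleGraph V} {S : Set V} (hS : isMLDSet G S) :
    mldNum G ≤ S.ncard :=
  Nat.sInf_le ⟨S, hS, rfl⟩

theorem isLDSet_univ {V : Type*} (G : SimpleGraph V) : isLDSet G Set.univ :=
  ⟨fun x hx => absurd (Set.mem_univ x) hx, fun x hx => absurd (Set.mem_univ x) hx⟩

theorem le_ldNum_of_forall_isLDSet {V : Type*} {G : SimpleGraph V} {n : ℕ}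
    (h : ∀ S, isLDSet G S → n ≤ S.ncard) : n ≤ ldNum G :=
  le_csInf ⟨_, Set.univ, isLDSet_univ G, rfl⟩ (by rintro _ ⟨S, hS, rfl⟩; exact h S hS)

theorem Nat.exists_lt_testBit_ne_of_lt_two_pow {n x y : ℕ} (hx : x < 2 ^ n) (hy : y < 2 ^ n)
    (hxy : x ≠ y) : ∃ j < n, x.testBit j ≠ y.testBit j := by
  obtain ⟨j, hj⟩ := Nat.exists_testBit_ne_of_ne hxy
  refine ⟨j, lt_of_not_ge fun hnj => hj ?_, hj⟩
  have h2 : 2 ^ n ≤ 2 ^ j := Nat.pow_le_pow_right two_pos hnj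
  rw [Nat.testBit_lt_two_pow (hx.trans_le h2), Nat.testBit_lt_two_pow (hy.trans_le h2)]

namespace Gs

variable {s : ℕ}

abbrev p : GsV s := none
abbrev a (i : Fin (2 ^ (s + 1))) : GsV s := some (Sum.inl i)
abbrev b (i : Fin (2 ^ (s + 1))) : GsV s := some (Sum.inr (Sum.inl i))
abbrev c (j : Fin (s + 1)) : GsV s := some (Sum.inr (Sum.inr j))

theorem adj_p_a (i : Fin (2 ^ (s + 1))) : (Gs s).Adj p (a i) :=
  (fromRel_adj _ _ _).mpr ⟨by simp, Or.inl trivial⟩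

theorem adj_a_b (i : Fin (2 ^ (s + 1))) : (Gs s).Adj (a i) (b i) :=
  (fromRel_adj _ _ _).mpr ⟨by simp, Or.inl rfl⟩

theorem adj_b_c {i : Fin (2 ^ (s + 1))} {j : Fin (s + 1)} (h : (i : ℕ).testBit j = true) :
    (Gs s).Adj (b i) (c j) :=
  (fromRel_adj _ _ _).mpr ⟨by simp, Or.inl h⟩

theorem rel_of_adj {x y : GsV s} (h : (Gs s).Adj x y) : GsRel s x y ∨ GsRel s y x :=
  ((fromRel_adj _ _ _).mp h).2

theorem adj_a_iff (i : Fin (2 ^ (s + 1))) (y : GsV s) :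
    (Gs s).Adj (a i) y ↔ y = p ∨ y = b i := by
  refine ⟨fun h => ?_, ?_⟩
  · have h' := rel_of_adj h
    rcases y with _ | (i' | (i' | j')) <;> simp_all [GsRel]
  · rintro (rfl | rfl)
    exacts [(adj_p_a i).symm, adj_a_b i]

theorem exists_testBit_ne {i i' : Fin (2 ^ (s + 1))} (h : i ≠ i') :
    ∃ j : Fin (s + 1), (i : ℕ).testBit j ≠ (i' : ℕ).testBit j := by
  obtain ⟨j, hj, hne⟩ := Nat.exists_lt_testBit_ne_of_lt_two_pow i.isLt i'.isLt (Fin.val_ne_of_ne h)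
  exact ⟨⟨j, hj⟩, hne⟩

theorem exists_testBit_of_ne_zero {i : Fin (2 ^ (s + 1))} (h : i ≠ 0) :
    ∃ j : Fin (s + 1), (i : ℕ).testBit j = true := by
  obtain ⟨j, hj⟩ := exists_testBit_ne h
  exact ⟨j, by simpa using hj⟩

def bitPair (j k : Fin (s + 1)) : Fin (2 ^ (s + 1)) :=
  ⟨2 ^ (j : ℕ) ||| 2 ^ (k : ℕ),
    Nat.or_lt_two_pow (Nat.pow_lt_pow_right one_lt_two j.isLt)
      (Nat.pow_lt_pow_right one_lt_two k.isLt)⟩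

theorem testBit_bitPair_left (j k : Fin (s + 1)) : (bitPair j k : ℕ).testBit j = true := by
  simp [bitPair]

theorem testBit_bitPair_right (j k : Fin (s + 1)) : (bitPair j k : ℕ).testBit k = true := by
  simp [bitPair]

def distFromP : GsV s → ℕ
  | none => 0
  | some (Sum.inl _) => 1
  | some (Sum.inr (Sum.inl _)) => 2
  | some (Sum.inr (Sum.inr _)) => 3

def distFromC (j : Fin (s + 1)) : GsV s → ℕ
  | none => 3
  | some (Sum.inl i) => if (i : ℕ).testBit j then 2 else 4
  | some (Sum.inr (Sum.inl i)) => if (i : ℕ).testBit j then 1 else if i = 0 then 5 else 3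
  | some (Sum.inr (Sum.inr k)) => if k = j then 0 else 2

theorem dist_p (x : GsV s) : (Gs s).dist p x = distFromP x := by
  refine dist_eq_of_lipschitz_of_descent distFromP (fun x y h => ?_) rfl (fun v hv => ?_) x
  · have h' := rel_of_adj h
    rcases x with _ | (i | (i | j)) <;> rcases y with _ | (i' | (i' | j')) <;>
      simp_all [GsRel, distFromP]
  · rcases v with _ | (i | (i | j))
    · exact absurd rfl hv
    · exact ⟨p, adj_p_a i, rfl⟩
    · exact ⟨a i, adj_a_b i, rfl⟩
    · exact ⟨b (bitPair j j), adj_b_c (testBit_bitPair_left j j), rfl⟩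

theorem dist_c (j : Fin (s + 1)) (x : GsV s) : (Gs s).dist (c j) x = distFromC j x := by
  refine dist_eq_of_lipschitz_of_descent (distFromC j) (fun x y h => ?_) (by simp [distFromC])
    (fun v hv => ?_) x
  · have h' := rel_of_adj h
    rcases x with _ | (i | (i | k)) <;> rcases y with _ | (i' | (i' | k')) <;>
      simp_all [GsRel, distFromC] <;> split_ifs <;> first | omega | simp_all
  · rcases v with _ | (i | (i | k))
    · exact ⟨a (bitPair j j), (adj_p_a _).symm, by simp [distFromC, testBit_bitPair_left]⟩
    · by_cases hij : (i : ℕ).testBit j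
      · exact ⟨b i, (adj_a_b i).symm, by simp [distFromC, hij]⟩
      · exact ⟨p, adj_p_a i, by simp [distFromC, hij]⟩
    · by_cases hij : (i : ℕ).testBit j
      · exact ⟨c j, (adj_b_c hij).symm, by simp [distFromC, hij]⟩
      by_cases hi : i = 0
      · exact ⟨a i, adj_a_b i, by simp [distFromC, hi]⟩
      obtain ⟨k, hik⟩ := exists_testBit_of_ne_zero hi
      have hkj : k ≠ j := by rintro rfl; simp_all
      exact ⟨c k, (adj_b_c hik).symm, by simp [distFromC, hij, hi, hkj]⟩
    · have hkj : k ≠ j := by rintro rfl; exact hv rfl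
      exact ⟨b (bitPair j k), adj_b_c (testBit_bitPair_right j k),
        by simp [distFromC, hkj, testBit_bitPair_left]⟩

def mldSet (s : ℕ) : Set (GsV s) := insert p (insert (b 0) (Set.range c))

theorem ncard_mldSet : (mldSet s).ncard = s + 3 := by
  have hc : (Set.range (c (s := s))).ncard = s + 1 := by
    rw [Set.ncard_range_of_injective (fun j k h => by simpa using h), Nat.card_eq_fintype_card,
      Fintype.card_fin]
  rw [mldSet, Set.ncard_insert_of_notMem (by simp), Set.ncard_insert_of_notMem (by simp), hc]

theorem isDominatingSet_mldSet : isDominatingSet (Gs s) (mldSet s) := by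
  intro x hx
  rcases x with _ | (i | (i | j))
  · simp [mldSet] at hx
  · exact ⟨p, by simp [mldSet], adj_p_a i⟩
  · have hi : i ≠ 0 := by rintro rfl; simp [mldSet] at hx
    obtain ⟨j, hj⟩ := exists_testBit_of_ne_zero hi
    exact ⟨c j, by simp [mldSet], (adj_b_c hj).symm⟩
  · simp [mldSet] at hx

theorem isResolvingSet_mldSet : isResolvingSet (Gs s) (mldSet s) := by
  intro x y hxy
  by_cases hp : distFromP x = distFromP y
  swap
  · exact ⟨p, by simp [mldSet], by rwa [dist_p, dist_p]⟩
  have hc (j : Fin (s + 1)) (h : distFromC j x ≠ distFromC j y) :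
      ∃ u ∈ mldSet s, (Gs s).dist u x ≠ (Gs s).dist u y :=
    ⟨c j, by simp [mldSet], by rwa [dist_c, dist_c]⟩
  rcases x with _ | (i | (i | j)) <;> rcases y with _ | (i' | (i' | j')) <;>
    norm_num [distFromP] at hp
  · exact absurd rfl hxy
  · have hii : i ≠ i' := by rintro rfl; exact hxy rfl
    obtain ⟨j, hj⟩ := exists_testBit_ne hii
    refine hc j ?_
    cases hb : (i : ℕ).testBit j <;> cases hb' : (i' : ℕ).testBit j <;> simp_all [distFromC]
  · have hii : i ≠ i' := by rintro rfl; exact hxy rfl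
    obtain ⟨j, hj⟩ := exists_testBit_ne hii
    refine hc j ?_
    cases hb : (i : ℕ).testBit j <;> cases hb' : (i' : ℕ).testBit j <;> simp_all [distFromC] <;>
      split_ifs <;> omega
  · refine hc j ?_
    have hjj : j' ≠ j := by rintro rfl; exact hxy rfl
    simp [distFromC, hjj]

theorem eq_of_isLDSet_of_notMem {S : Set (GsV s)} (hS : isLDSet (Gs s) S) {i i' : Fin (2 ^ (s + 1))}
    (hai : a i ∉ S) (hbi : b i ∉ S) (hai' : a i' ∉ S) (hbi' : b i' ∉ S) : i = i' := by
  by_contra hne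
  refine hS.2 (a i) hai (a i') hai' (by simpa using hne) ?_
  ext z
  simp only [Set.mem_inter_iff, mem_neighborSet, adj_a_iff]
  constructor <;> rintro ⟨rfl | rfl, hz⟩ <;> simp_all

theorem le_ncard_of_isLDSet {S : Set (GsV s)} (hS : isLDSet (Gs s) S) :
    2 ^ (s + 1) - 1 ≤ S.ncard := by
  classical
  set T : Set (Fin (2 ^ (s + 1))) := {i | a i ∈ S ∨ b i ∈ S}
  have hT : 2 ^ (s + 1) - 1 ≤ T.ncard := by
    have hTc : Tᶜ.ncard ≤ 1 := by
      refine (Set.ncard_le_one (Set.toFinite _)).mpr fun i hi i' hi' => ?_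
      simp only [T, Set.mem_compl_iff, Set.mem_ofPred_eq, not_or] at hi hi'
      exact eq_of_isLDSet_of_notMem hS hi.1 hi.2 hi'.1 hi'.2
    have := Set.ncard_add_ncard_compl T
    rw [Nat.card_eq_fintype_card, Fintype.card_fin] at this
    omega
  let g (i : Fin (2 ^ (s + 1))) : GsV s := if a i ∈ S then a i else b i
  have hgS : g '' T ⊆ S := by
    rintro _ ⟨i, hi, rfl⟩
    by_cases ha : a i ∈ S <;> simp_all [g, T]
  have hg : Set.InjOn g T := by
    intro i _ i' _ h
    simp only [g] at h
    split_ifs at h <;> simp_all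
  calc 2 ^ (s + 1) - 1 ≤ T.ncard := hT
    _ = (g '' T).ncard := hg.ncard_image.symm
    _ ≤ S.ncard := Set.ncard_le_ncard hgS

end Gs

theorem stmt12_general (s : ℕ) :
    mldNum (Gs s) ≤ s + 3 ∧
      2 ^ (s + 1) - 1 ≤ ldNum (Gs s) ∧
      2 ^ (mldNum (Gs s) - 2) - 1 ≤ ldNum (Gs s) := by
  have hM : mldNum (Gs s) ≤ s + 3 :=
    (mldNum_le_ncard ⟨Gs.isResolvingSet_mldSet, Gs.isDominatingSet_mldSet⟩).trans_eq
      Gs.ncard_mldSet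
  have hL : 2 ^ (s + 1) - 1 ≤ ldNum (Gs s) :=
    le_ldNum_of_forall_isLDSet fun _ => Gs.le_ncard_of_isLDSet
  exact ⟨hM, hL, le_trans (Nat.sub_le_sub_right (Nat.pow_le_pow_right two_pos (by omega)) 1) hL⟩

theorem stmt12 (s : ℕ) (hs : 1 ≤ s) :
    mldNum (Gs s) ≤ s + 3 ∧
      2 ^ (s + 1) - 1 ≤ ldNum (Gs s) ∧
      2 ^ (mldNum (Gs s) - 2) - 1 ≤ ldNum (Gs s) :=
  stmt12_general s
end

section
/- Let G be a finite simple connected graph of order at least 2 and let S be an MLD-set of G. Then every pair of distinct vertices x, y ∈ V(G) \ S is doubly resolved by S, i.e., there exist u, v ∈ S with d(u,x) − d(u,y) ≠ d(v,x) − d(v,y). -/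
open SimpleGraph

variable {V : Type*}

theorem SimpleGraph.Reachable.dist_sub_dist_nonpos_of_adj {G : SimpleGraph V} {v x y : V}
    (hvy : G.Reachable v y) (hvx : G.Adj v x) (hne : v ≠ y) :
    (G.dist v x : ℤ) - G.dist v y ≤ 0 := by
  have := hvy.pos_dist_of_ne hne
  rw [dist_eq_one_iff_adj.2 hvx]
  omega

/-- A pair that is not doubly resolved by `S` has `d(u,x) - d(u,y)` constant on `S`; a neighbour
of `x` makes that constant `≤ 0` and a neighbour of `y` makes it `≥ 0`, so it vanishes and no
vertex of `S` resolves `x` and `y`. -/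
theorem setDoublyResolves_of_adj {G : SimpleGraph V} (hG : G.Connected)
    {S : Set V} (hS : isResolvingSet G S) {v w x y : V} (hxy : x ≠ y)
    (hv : v ∈ S) (hvx : G.Adj v x) (hvy : v ≠ y)
    (hw : w ∈ S) (hwy : G.Adj w y) (hwx : w ≠ x) :
    setDoublyResolves G S x y := by
  by_contra h
  have hconst : ∀ a ∈ S, ∀ b ∈ S,
      (G.dist a x : ℤ) - G.dist a y = (G.dist b x : ℤ) - G.dist b y := by
    simpa [setDoublyResolves, doublyResolves] using h
  obtain ⟨u, hu, hres⟩ := hS x y hxy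
  have hv_nonpos := (hG v y).dist_sub_dist_nonpos_of_adj hvx hvy
  have hw_nonneg := (hG w x).dist_sub_dist_nonpos_of_adj hwy hwx
  have := hconst u hu v hv
  have := hconst u hu w hw
  omega

theorem stmt14_general {V : Type*} (G : SimpleGraph V)
    (hconn : G.Connected)
    (S : Set V) (hS : isMLDSet G S) :
    ∀ x y : V, x ∉ S → y ∉ S → x ≠ y → setDoublyResolves G S x y := by
  intro x y hx hy hxy
  obtain ⟨v, hv, hvx⟩ := hS.2 x hx
  obtain ⟨w, hw, hwy⟩ := hS.2 y hy
  exact setDoublyResolves_of_adj hconn hS.1 hxy hv hvx (ne_of_mem_of_not_mem hv hy)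
    hw hwy (ne_of_mem_of_not_mem hw hx)

theorem stmt14 {V : Type*} [Fintype V] (G : SimpleGraph V)
    (hconn : G.Connected) (hcard : 2 ≤ Fintype.card V)
    (S : Set V) (hS : isMLDSet G S) :
    ∀ x y : V, x ∉ S → y ∉ S → x ≠ y → setDoublyResolves G S x y :=
  stmt14_general G hconn S hS
end

section
/- Let S be an MLD-set of a finite simple connected graph G of order at least 2, and let u ∈ S and x ∈ V(G) \ S be such that the pair {u,x} is not doubly resolved by S. Then N(x) ∩ S = {u}; furthermore, x is the only vertex of V(G) \ S such that {u,x} is not doubly resolved by S. -/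
open SimpleGraph

variable {V : Type*}

/-!
If `S` does not doubly resolve `{u, x}` with `u ∈ S`, then comparing each `v ∈ S` with `u` itself
gives `d(v, x) = d(v, u) + d(u, x)` for all `v ∈ S`. Applied to a vertex of `S` dominating `x`,
this forces that vertex to be `u` and `d(u, x) = 1`; hence `d(v, x) = d(v, u) + 1` on `S`, which
pins down both `N(x) ∩ S` and, since `S` is resolving, the vertex `x` itself.
-/

section

variable {G : SimpleGraph V} {S : Set V} {u x : V}

lemma isResolvingSet.eq_of_forall_dist_eq (hS : isResolvingSet G S) {y : V}
    (h : ∀ v ∈ S, G.dist v x = G.dist v y) : x = y := by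
  by_contra hxy
  obtain ⟨v, hv, hne⟩ := hS x y hxy
  exact hne (h v hv)

lemma dist_eq_dist_add_dist_of_not_setDoublyResolves (hu : u ∈ S)
    (hnd : ¬ setDoublyResolves G S u x) {v : V} (hv : v ∈ S) :
    G.dist v x = G.dist v u + G.dist u x := by
  have h : (G.dist v u : ℤ) - G.dist v x = (G.dist u u : ℤ) - G.dist u x :=
    not_not.mp fun h => hnd ⟨v, hv, u, hu, h⟩
  rw [SimpleGraph.dist_self] at h
  omega

lemma dist_eq_dist_add_one_of_not_setDoublyResolves (hconn : G.Connected)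
    (hdom : isDominatingSet G S) (hu : u ∈ S) (hx : x ∉ S)
    (hnd : ¬ setDoublyResolves G S u x) {v : V} (hv : v ∈ S) :
    G.dist v x = G.dist v u + 1 := by
  obtain ⟨s, hs, hsx⟩ := hdom x hx
  have hux : 0 < G.dist u x := hconn.pos_dist_of_ne fun h => hx (h ▸ hu)
  have hs' := dist_eq_dist_add_dist_of_not_setDoublyResolves hu hnd hs
  rw [dist_eq_one_iff_adj.mpr hsx] at hs'
  rw [dist_eq_dist_add_dist_of_not_setDoublyResolves hu hnd hv]
  omega

lemma neighborSet_inter_eq_singleton_of_forall_dist_eq_dist_add_one (hconn : G.Connected)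
    (hu : u ∈ S) (h : ∀ v ∈ S, G.dist v x = G.dist v u + 1) :
    G.neighborSet x ∩ S = {u} := by
  ext w
  simp only [Set.mem_inter_iff, mem_neighborSet, Set.mem_singleton_iff]
  constructor
  · rintro ⟨hxw, hw⟩
    have hwx := h w hw
    rw [dist_eq_one_iff_adj.mpr hxw.symm] at hwx
    exact hconn.dist_eq_zero_iff.mp (by omega)
  · rintro rfl
    have hux := h w hu
    rw [SimpleGraph.dist_self] at hux
    exact ⟨(dist_eq_one_iff_adj.mp hux).symm, hu⟩

end

theorem stmt15_general {V : Type*} (G : SimpleGraph V)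
    (hconn : G.Connected)
    (S : Set V) (hS : isMLDSet G S) (u : V) (hu : u ∈ S)
    (x : V) (hx : x ∉ S) (hnd : ¬ setDoublyResolves G S u x) :
    G.neighborSet x ∩ S = {u} ∧
      ∀ x' : V, x' ∉ S → ¬ setDoublyResolves G S u x' → x' = x := by
  obtain ⟨hres, hdom⟩ := hS
  have hdist := fun v (hv : v ∈ S) =>
    dist_eq_dist_add_one_of_not_setDoublyResolves hconn hdom hu hx hnd hv
  refine ⟨neighborSet_inter_eq_singleton_of_forall_dist_eq_dist_add_one hconn hu hdist,
    fun x' hx' hnd' => hres.eq_of_forall_dist_eq fun v hv => ?_⟩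
  rw [dist_eq_dist_add_one_of_not_setDoublyResolves hconn hdom hu hx' hnd' hv, hdist v hv]

theorem stmt15 {V : Type*} [Fintype V] (G : SimpleGraph V)
    (hconn : G.Connected) (hcard : 2 ≤ Fintype.card V)
    (S : Set V) (hS : isMLDSet G S) (u : V) (hu : u ∈ S)
    (x : V) (hx : x ∉ S) (hnd : ¬ setDoublyResolves G S u x) :
    G.neighborSet x ∩ S = {u} ∧
      ∀ x' : V, x' ∉ S → ¬ setDoublyResolves G S u x' → x' = x :=
  stmt15_general G hconn S hS u hu x hx hnd
end

section
/- Let G be a finite simple connected graph with girth at least 5, of order at least 2, and not isomorphic to the path P_2. Let S be any MLD-set of G. Then each u ∈ S has at most one neighbor of degree 1 in V(G) \ S; defining, for each u ∈ S, the vertex ū to be this unique degree-1 neighbor of u in V(G) \ S if it exists and u otherwise, the set S̄ = {ū : u ∈ S} is a doubly resolving set of G of cardinality |S|. Consequently, ψ(G) ≤ γ_M(G). -/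
open SimpleGraph

variable {V : Type*}

/-!
Fix `x ≠ y` and let `D(v) = d(v, x) - d(v, y)`. Replacing `u ∈ S` by a pendant leaf `ū` adds one
to every distance from `u` except those to `ū`, so `D(ū) = D(u)` unless `ū ∈ {x, y}`. If `S̄` does
not doubly resolve `{x, y}`, then `D` is constant, say `k`, on `S̄`. For `k = 0` this contradicts
`S` being resolving. For `k > 0` (`k < 0` is symmetric) we get `x ∉ S`, since otherwise `S = {x}`
and `G ≅ P₂`. Let `u ∈ S` dominate `x`: `ū = y` would force `S = {u}`, and otherwise `u = y` and
`k = 1`. In that last case a second neighbour `z` of `x`, together with a vertex of `S` dominating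
`z`, closes a cycle of length 3 or 4 through `x` and `y`.
-/

variable {G : SimpleGraph V}

theorem SimpleGraph.girth_le_three {a b c : V} (hab : G.Adj a b) (hbc : G.Adj b c)
    (hca : G.Adj c a) : G.girth ≤ 3 := by
  have hc : (Walk.cons hab (Walk.cons hbc (Walk.cons hca Walk.nil))).IsCircuit := by
    refine ⟨?_, by simp⟩
    simp [Walk.isTrail_def, hab.ne, hbc.ne, hca.ne, hab.ne.symm, hca.ne.symm]
  exact hc.girth_le_length

theorem SimpleGraph.girth_le_four {a b c d : V} (hab : G.Adj a b) (hbc : G.Adj b c)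
    (hcd : G.Adj c d) (hda : G.Adj d a) (hac : a ≠ c) (hbd : b ≠ d) : G.girth ≤ 4 := by
  have hc : (Walk.cons hab (Walk.cons hbc (Walk.cons hcd (Walk.cons hda Walk.nil)))).IsCircuit := by
    refine ⟨?_, by simp⟩
    simp [Walk.isTrail_def, hab.ne, hbc.ne, hcd.ne, hda.ne, hab.ne.symm, hda.ne.symm, hac, hbd,
      hac.symm]
  exact hc.girth_le_length

theorem isLeaf.eq_of_adj_s16 {x u v : V} (hx : isLeaf G x) (hu : G.Adj u x) (hv : G.Adj v x) :
    u = v := by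
  obtain ⟨a, ha⟩ := Set.ncard_eq_one.mp hx
  have hu' : u ∈ G.neighborSet x := hu.symm
  have hv' : v ∈ G.neighborSet x := hv.symm
  rw [ha] at hu' hv'
  exact hu'.trans hv'.symm

theorem exists_adj_ne_of_not_isLeaf {x y : V} (hxy : G.Adj x y) (hx : ¬ isLeaf G x) :
    ∃ z, G.Adj x z ∧ z ≠ y := by
  by_contra! h
  exact hx (by
    rw [isLeaf, (Set.eq_singleton_iff_unique_mem (s := G.neighborSet x)).mpr ⟨hxy, h⟩,
      Set.ncard_singleton])

theorem isLeaf.dist_eq_dist_add_one (hconn : G.Connected) {x u z : V} (hx : isLeaf G x)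
    (hu : G.Adj u x) (hz : z ≠ x) : G.dist x z = G.dist u z + 1 := by
  apply le_antisymm
  · have := hconn.dist_triangle (u := x) (v := u) (w := z)
    rwa [dist_eq_one_iff_adj.mpr hu.symm, add_comm] at this
  · obtain ⟨p, hp⟩ := hconn.exists_walk_length_eq_dist x z
    obtain ⟨w, hxw, q, rfl⟩ := Walk.exists_eq_cons_of_ne hz.symm p
    obtain rfl : w = u := hx.eq_of_adj_s16 hxw.symm hu
    rw [← hp, Walk.length_cons]
    exact Nat.add_le_add_right (dist_le q) 1

theorem isResolvingSet.eq_of_isLeaf (hconn : G.Connected) {S : Set V} (hS : isResolvingSet G S)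
    {u x y : V} (hxS : x ∉ S) (hyS : y ∉ S) (hx : isLeaf G x) (hy : isLeaf G y)
    (hux : G.Adj u x) (huy : G.Adj u y) : x = y := by
  by_contra hxy
  obtain ⟨w, hwS, hw⟩ := hS x y hxy
  rw [dist_comm, hx.dist_eq_dist_add_one hconn hux (ne_of_mem_of_not_mem hwS hxS), dist_comm,
    dist_comm (v := y), hy.dist_eq_dist_add_one hconn huy (ne_of_mem_of_not_mem hwS hyS),
    dist_comm] at hw
  exact hw rfl

theorem isDominatingSet.adj_of_singleton {u v : V} (hS : isDominatingSet G {u}) (hv : v ≠ u) :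
    G.Adj u v := by
  obtain ⟨_, rfl, h⟩ := hS v hv
  exact h

theorem isMLDSet.eq_of_singleton {u v w : V} (hS : isMLDSet G {u}) (hv : v ≠ u) (hw : w ≠ u) :
    v = w := by
  by_contra hvw
  obtain ⟨_, rfl, hd⟩ := hS.1 v w hvw
  rw [dist_eq_one_iff_adj.mpr (hS.2.adj_of_singleton hv),
    dist_eq_one_iff_adj.mpr (hS.2.adj_of_singleton hw)] at hd
  exact hd rfl

theorem isMLDSet.nonempty_iso_pathGraph_two_of_singleton {u v : V} (hS : isMLDSet G {u})
    (hv : v ≠ u) : Nonempty (G ≃g pathGraph 2) := by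
  have hcard : Nat.card V = 2 := Nat.card_eq_two_iff.mpr ⟨u, v, hv.symm, by
    ext w
    by_cases hw : w = u
    · simp [hw]
    · simp [hS.eq_of_singleton hw hv]⟩
  have : Finite V := Nat.finite_of_card_ne_zero (by omega)
  have htop : G = ⊤ := by
    ext a b
    refine ⟨Adj.ne, fun hab => ?_⟩
    by_cases ha : a = u
    · exact ha ▸ hS.2.adj_of_singleton (ha ▸ hab).symm
    by_cases hb : b = u
    · exact (hb ▸ hS.2.adj_of_singleton ha).symm
    exact absurd (hS.eq_of_singleton ha hb) hab
  rw [htop, pathGraph_two_eq_top]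
  exact ⟨Iso.completeGraph (Finite.equivFinOfCardEq hcard)⟩

noncomputable def distDiff (G : SimpleGraph V) (x y v : V) : ℤ := G.dist v x - G.dist v y

theorem distDiff_left (x y : V) : distDiff G x y x = -G.dist x y := by
  simp [distDiff]

theorem distDiff_right (x y : V) : distDiff G x y y = G.dist y x := by
  simp [distDiff]

theorem distDiff_swap (x y v : V) : distDiff G y x v = -distDiff G x y v := by
  simp [distDiff]

theorem distDiff_of_adj_left {x y v : V} (hv : G.Adj v x) : distDiff G x y v = 1 - G.dist v y := by
  rw [distDiff, dist_eq_one_iff_adj.mpr hv, Nat.cast_one]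

theorem setDoublyResolves_iff_exists_distDiff_ne {T : Set V} {x y : V} :
    setDoublyResolves G T x y ↔ ∃ a ∈ T, ∃ b ∈ T, distDiff G x y a ≠ distDiff G x y b :=
  Iff.rfl

theorem ne_left_of_distDiff_pos {x y v : V} (h : 0 < distDiff G x y v) : v ≠ x := by
  rintro rfl
  rw [distDiff_left] at h
  omega

theorem isResolvingSet.exists_distDiff_ne_zero {S : Set V} (hS : isResolvingSet G S) {x y : V}
    (hxy : x ≠ y) : ∃ u ∈ S, distDiff G x y u ≠ 0 := by
  obtain ⟨u, huS, hu⟩ := hS x y hxy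
  exact ⟨u, huS, sub_ne_zero.mpr (by exact_mod_cast hu)⟩

theorem false_of_girth_of_distDiff_eq_one {S : Set V} {x y : V} (hconn : G.Connected)
    (hg : 5 ≤ G.girth) (hS : isDominatingSet G S) (hxS : x ∉ S) (hxy : G.Adj x y) {z : V}
    (hxz : G.Adj x z) (hzy : z ≠ y) (hD : ∀ u ∈ S, distDiff G x y u = 1) : False := by
  have hzS : z ∉ S := fun hzS => by
    have := hD z hzS
    rw [distDiff_of_adj_left hxz.symm] at this
    exact hzy ((hconn.dist_eq_zero_iff).mp (by omega))
  obtain ⟨w, hwS, hwz⟩ := hS z hzS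
  by_cases hwy : w = y
  · subst hwy
    have := girth_le_three hxz hwz.symm hxy.symm
    omega
  · have hwx : G.dist w x ≤ 2 := by
      have := hconn.dist_triangle (u := w) (v := z) (w := x)
      rwa [dist_eq_one_iff_adj.mpr hwz, dist_eq_one_iff_adj.mpr hxz.symm] at this
    have hwy1 : G.dist w y = 1 := by
      have hD' := hD w hwS
      have := hconn.pos_dist_of_ne hwy
      rw [distDiff] at hD'
      omega
    have := girth_le_four hxz hwz.symm (dist_eq_one_iff_adj.mp hwy1) hxy.symm
      (ne_of_mem_of_not_mem hwS hxS).symm hzy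
    omega

/-- The map `u ↦ ū` of the theorem, on `S`. -/
def IsLeafReplacement (G : SimpleGraph V) (S : Set V) (f : V → V) : Prop :=
  ∀ u ∈ S,
    (f u ∉ S ∧ isLeaf G (f u) ∧ G.Adj u (f u)) ∨
      (f u = u ∧ ∀ x : V, x ∉ S → isLeaf G x → ¬ G.Adj u x)

theorem exists_isLeafReplacement (G : SimpleGraph V) (S : Set V) :
    ∃ f, IsLeafReplacement G S f := by
  classical
  refine ⟨fun u => if h : ∃ l, l ∉ S ∧ isLeaf G l ∧ G.Adj u l then h.choose else u, ?_⟩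
  intro u _
  by_cases h : ∃ l, l ∉ S ∧ isLeaf G l ∧ G.Adj u l
  · exact .inl (by simpa only [dif_pos h] using h.choose_spec)
  · exact .inr ⟨dif_neg h, fun l hlS hl hul => h ⟨l, hlS, hl, hul⟩⟩

namespace IsLeafReplacement

variable {S : Set V} {f : V → V}

theorem injOn (hf : IsLeafReplacement G S f) : Set.InjOn f S := by
  intro u hu v hv h
  rcases hf u hu with ⟨hfuS, hfu, hufu⟩ | ⟨hfu, -⟩ <;>
    rcases hf v hv with ⟨hfvS, -, hvfv⟩ | ⟨hfv, -⟩
  · exact hfu.eq_of_adj_s16 hufu (h ▸ hvfv)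
  · exact absurd (by rwa [h, hfv]) hfuS
  · exact absurd (by rwa [← h, hfu]) hfvS
  · rw [← hfu, h, hfv]

theorem adj_of_apply_not_mem (hf : IsLeafReplacement G S f) {u : V} (hu : u ∈ S)
    (hfu : f u ∉ S) : isLeaf G (f u) ∧ G.Adj u (f u) := by
  rcases hf u hu with ⟨-, h⟩ | ⟨h, -⟩
  · exact h
  · exact absurd (h.symm ▸ hu) hfu

theorem distDiff_apply (hf : IsLeafReplacement G S f) (hconn : G.Connected) {u x y : V}
    (hu : u ∈ S) (hx : f u ≠ x) (hy : f u ≠ y) : distDiff G x y (f u) = distDiff G x y u := by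
  rcases hf u hu with ⟨-, hl, hul⟩ | ⟨h, -⟩
  · simp only [distDiff, hl.dist_eq_dist_add_one hconn hul hx.symm,
      hl.dist_eq_dist_add_one hconn hul hy.symm]
    push_cast
    ring
  · rw [h]

theorem false_of_distDiff_const_zero (hconn : G.Connected) (hS : isResolvingSet G S)
    (hf : IsLeafReplacement G S f) {x y : V} (hxy : x ≠ y)
    (hconst : ∀ u ∈ S, distDiff G x y (f u) = 0) : False := by
  obtain ⟨u, huS, hu⟩ := hS.exists_distDiff_ne_zero hxy
  have hdist : G.dist x y ≠ 0 := fun h => hxy ((hconn.dist_eq_zero_iff).mp h)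
  have hfx : f u ≠ x := fun h => by
    simpa [h, distDiff_left, hdist] using hconst u huS
  have hfy : f u ≠ y := fun h => by
    simpa [h, distDiff_right, dist_comm, hdist] using hconst u huS
  exact hu (hf.distDiff_apply hconn huS hfx hfy ▸ hconst u huS)

section PositiveDistDiff

variable {x y : V} {k : ℤ}

theorem distDiff_eq_or_apply_eq_right (hconn : G.Connected)
    (hf : IsLeafReplacement G S f) (hk : 0 < k) (hconst : ∀ u ∈ S, distDiff G x y (f u) = k)
    {u : V} (hu : u ∈ S) : distDiff G x y u = k ∨ f u = y ∧ y ∉ S := by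
  by_cases hfu : f u = y
  · rcases hf u hu with ⟨h, -⟩ | ⟨h, -⟩
    · exact .inr ⟨hfu, hfu ▸ h⟩
    · exact .inl (h ▸ hconst u hu)
  · have hfx : f u ≠ x := ne_left_of_distDiff_pos (hconst u hu ▸ hk)
    exact .inl (hf.distDiff_apply hconn hu hfx hfu ▸ hconst u hu)

/-- Every `u ∈ S` other than the neighbour `w` of `y` has `D(u) ≤ d(w, x) - 1 < k`. -/
theorem eq_singleton_of_isLeaf_right (hconn : G.Connected)
    (hf : IsLeafReplacement G S f) (hk : 0 < k) (hconst : ∀ u ∈ S, distDiff G x y (f u) = k)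
    {w : V} (hwS : w ∈ S) (hy : isLeaf G y) (hyS : y ∉ S) (hwy : G.Adj w y)
    (hwx : G.dist w x ≤ 1) :
    S = {w} := by
  refine Set.eq_singleton_iff_unique_mem.mpr ⟨hwS, fun u hu => ?_⟩
  rcases hf.distDiff_eq_or_apply_eq_right hconn hk hconst hu with hD | ⟨hfu, -⟩
  · have hux : G.dist u x ≤ G.dist u w + G.dist w x := hconn.dist_triangle
    rw [distDiff, dist_comm (v := y),
      hy.dist_eq_dist_add_one hconn hwy (ne_of_mem_of_not_mem hu hyS), dist_comm (u := w)] at hD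
    omega
  · exact hy.eq_of_adj_s16 (hfu ▸ (hf.adj_of_apply_not_mem hu (hfu ▸ hyS)).2) hwy

theorem left_not_mem (hconn : G.Connected)
    (hnp2 : ¬ Nonempty (G ≃g pathGraph 2)) (hS : isMLDSet G S) (hf : IsLeafReplacement G S f)
    (hxy : x ≠ y) (hk : 0 < k) (hconst : ∀ u ∈ S, distDiff G x y (f u) = k) : x ∉ S := by
  intro hxS
  have hfxS : f x ∉ S := fun h => by
    rcases hf x hxS with ⟨h', -⟩ | ⟨h', -⟩
    exacts [h' h, ne_left_of_distDiff_pos (hconst x hxS ▸ hk) h']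
  obtain ⟨hfx, hxfx⟩ := hf.adj_of_apply_not_mem hxS hfxS
  have hfxy : f x = y := by
    have := hconst x hxS
    rw [distDiff_of_adj_left hxfx.symm] at this
    exact (hconn.dist_eq_zero_iff).mp (by omega)
  rw [hfxy] at hfx hfxS hxfx
  have hSx := hf.eq_singleton_of_isLeaf_right hconn hk hconst hxS hfx hfxS hxfx (by simp)
  exact hnp2 ((hSx ▸ hS).nonempty_iso_pathGraph_two_of_singleton hxy.symm)

theorem false_of_distDiff_const_pos (hconn : G.Connected) (hg : 5 ≤ G.girth)
    (hnp2 : ¬ Nonempty (G ≃g pathGraph 2)) (hS : isMLDSet G S) (hf : IsLeafReplacement G S f)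
    (hxy : x ≠ y) (hk : 0 < k) (hconst : ∀ u ∈ S, distDiff G x y (f u) = k) : False := by
  have hxS := hf.left_not_mem hconn hnp2 hS hxy hk hconst
  obtain ⟨u, huS, hux⟩ := hS.2 x hxS
  have hD : distDiff G x y u = k := by
    refine (hf.distDiff_eq_or_apply_eq_right hconn hk hconst huS).resolve_right ?_
    rintro ⟨hfu, hyS⟩
    obtain ⟨hy, huy⟩ := hf.adj_of_apply_not_mem huS (hfu ▸ hyS)
    rw [hfu] at hy huy
    have hSu := hf.eq_singleton_of_isLeaf_right hconn hk hconst huS hy hyS huy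
      (dist_eq_one_iff_adj.mpr hux).le
    exact hxy ((hSu ▸ hS).eq_of_singleton (ne_of_mem_of_not_mem huS hxS).symm
      (ne_of_mem_of_not_mem huS hyS).symm)
  rw [distDiff_of_adj_left hux] at hD
  obtain rfl : u = y := (hconn.dist_eq_zero_iff).mp (by omega)
  obtain rfl : k = 1 := by simpa using hD.symm
  have hD1 : ∀ v ∈ S, distDiff G x u v = 1 := fun v hv =>
    (hf.distDiff_eq_or_apply_eq_right hconn hk hconst hv).resolve_right fun h => h.2 huS
  have hx : ¬ isLeaf G x := fun hx => by
    rcases hf u huS with ⟨hfuS, hfu, hufu⟩ | ⟨-, h⟩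
    · have := hS.1.eq_of_isLeaf hconn hfuS hxS hfu hx hufu hux
      exact ne_left_of_distDiff_pos (hconst u huS ▸ hk) this
    · exact h x hxS hx hux
  obtain ⟨z, hxz, hzu⟩ := exists_adj_ne_of_not_isLeaf hux.symm hx
  exact false_of_girth_of_distDiff_eq_one hconn hg hS.2 hxS hux.symm hxz hzu hD1

end PositiveDistDiff

theorem isDoublyResolvingSet_image (hconn : G.Connected) (hg : 5 ≤ G.girth)
    (hnp2 : ¬ Nonempty (G ≃g pathGraph 2)) (hS : isMLDSet G S) (hf : IsLeafReplacement G S f) :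
    isDoublyResolvingSet G (f '' S) := by
  intro x y hxy
  by_contra hres
  obtain ⟨u₀, hu₀⟩ : S.Nonempty := by
    by_cases hxS : x ∈ S
    exacts [⟨x, hxS⟩, (hS.2 x hxS).imp fun _ h => h.1]
  set k := distDiff G x y (f u₀)
  have hconst : ∀ u ∈ S, distDiff G x y (f u) = k := fun u hu => by
    by_contra h
    rw [setDoublyResolves_iff_exists_distDiff_ne] at hres
    exact hres ⟨f u, ⟨u, hu, rfl⟩, f u₀, ⟨u₀, hu₀, rfl⟩, h⟩
  rcases lt_trichotomy k 0 with hk | hk | hk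
  · refine hf.false_of_distDiff_const_pos hconn hg hnp2 hS hxy.symm (neg_pos.mpr hk) ?_
    intro u hu
    rw [distDiff_swap, hconst u hu]
  · exact hf.false_of_distDiff_const_zero hconn hS.1 hxy (hk ▸ hconst)
  · exact hf.false_of_distDiff_const_pos hconn hg hnp2 hS hxy hk hconst

end IsLeafReplacement

theorem psiNum_le_mldNum (hconn : G.Connected) (hg : 5 ≤ G.girth)
    (hnp2 : ¬ Nonempty (G ≃g pathGraph 2)) {S : Set V} (hS : isMLDSet G S) :
    psiNum G ≤ mldNum G := by
  obtain ⟨T, hT, hTcard⟩ := Nat.sInf_mem (⟨S.ncard, S, hS, rfl⟩ :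
    {n | ∃ T : Set V, isMLDSet G T ∧ T.ncard = n}.Nonempty)
  obtain ⟨f, hf⟩ := exists_isLeafReplacement G T
  refine Nat.sInf_le ⟨f '' T, hf.isDoublyResolvingSet_image hconn hg hnp2 hT, ?_⟩
  rw [hf.injOn.ncard_image, hTcard, mldNum]

theorem stmt16_general {V : Type*} (G : SimpleGraph V)
    (hconn : G.Connected)
    (hg : 5 ≤ G.girth) (hnp2 : ¬ Nonempty (G ≃g SimpleGraph.pathGraph 2))
    (S : Set V) (hS : isMLDSet G S) :
    (∀ u ∈ S, ∀ x y : V, x ∉ S → y ∉ S → isLeaf G x → isLeaf G y →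
        G.Adj u x → G.Adj u y → x = y) ∧
      (∀ f : V → V,
        (∀ u ∈ S,
          (f u ∉ S ∧ isLeaf G (f u) ∧ G.Adj u (f u)) ∨
            (f u = u ∧ ∀ x : V, x ∉ S → isLeaf G x → ¬ G.Adj u x)) →
        isDoublyResolvingSet G (f '' S) ∧ (f '' S).ncard = S.ncard) ∧
      psiNum G ≤ mldNum G := by
  refine ⟨fun u _ x y hxS hyS hx hy hux huy => hS.1.eq_of_isLeaf hconn hxS hyS hx hy hux huy,
    fun f hf => ⟨IsLeafReplacement.isDoublyResolvingSet_image hconn hg hnp2 hS hf,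
      (IsLeafReplacement.injOn hf).ncard_image⟩,
    psiNum_le_mldNum hconn hg hnp2 hS⟩

theorem stmt16 {V : Type*} [Fintype V] (G : SimpleGraph V)
    (hconn : G.Connected) (hcard : 2 ≤ Fintype.card V)
    (hg : 5 ≤ G.girth) (hnp2 : ¬ Nonempty (G ≃g SimpleGraph.pathGraph 2))
    (S : Set V) (hS : isMLDSet G S) :
    (∀ u ∈ S, ∀ x y : V, x ∉ S → y ∉ S → isLeaf G x → isLeaf G y →
        G.Adj u x → G.Adj u y → x = y) ∧
      (∀ f : V → V,
        (∀ u ∈ S,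
          (f u ∉ S ∧ isLeaf G (f u) ∧ G.Adj u (f u)) ∨
            (f u = u ∧ ∀ x : V, x ∉ S → isLeaf G x → ¬ G.Adj u x)) →
        isDoublyResolvingSet G (f '' S) ∧ (f '' S).ncard = S.ncard) ∧
      psiNum G ≤ mldNum G :=
  stmt16_general G hconn hg hnp2 S hS
end

section
/- For every finite simple connected graph G of order at least 2, ψ(G) ≤ γ_M(G) + γ(G). More precisely, if S₁ is a minimum MLD-set and S₂ is a minimum dominating set of G, then there exists a doubly resolving set of G of cardinality at most |S₁ ∪ S₂| + |S₁ ∩ S₂|. -/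
open SimpleGraph

variable {V : Type*}

/-!
Let `S₁` be a metric-locating-dominating set and `S₂` a dominating set, `W = S₁ ∪ S₂`.
Given `x ≠ y`, some `u ∈ S₁` has, say, `d(u,x) < d(u,y)`. Unless every `v ∈ W` sees the same
difference `d(v,x) - d(v,y) = c < 0`, two vertices of `W` doubly resolve `{x, y}`. In the constant
case `y ∉ W`, and the dominators of `y` in `S₁` and in `S₂` both must be `x`; so `x ∈ S₁ ∩ S₂`,
`c = -1`, and `y` lies one step farther than `x` from every vertex of `W`. Since `S₁` resolves,
such a `y` is unique for each `x`, so adding one such vertex per `x ∈ S₁ ∩ S₂` to `W` gives a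
doubly resolving set; then `x` and `y` themselves doubly resolve `{x, y}`.
-/

namespace SimpleGraph

variable (G : SimpleGraph V)

def IsOneFarther (W : Set V) (x y : V) : Prop :=
  y ∉ W ∧ ∀ w ∈ W, G.dist w y = G.dist w x + 1

open Classical in
noncomputable def oneFarther (W : Set V) (x : V) : V :=
  if h : ∃ y, G.IsOneFarther W x y then h.choose else x

variable {G}

lemma IsOneFarther.oneFarther_eq {S W : Set V} (hS : isResolvingSet G S) (hSW : S ⊆ W)
    {x y : V} (h : G.IsOneFarther W x y) : G.oneFarther W x = y := by
  have hex : ∃ y, G.IsOneFarther W x y := ⟨y, h⟩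
  rw [oneFarther, dif_pos hex]
  by_contra hne
  obtain ⟨z, hzS, hz⟩ := hS _ _ hne
  exact hz (by rw [hex.choose_spec.2 z (hSW hzS), h.2 z (hSW hzS)])

lemma doublyResolves_comm {u v x y : V} :
    doublyResolves G u v x y ↔ doublyResolves G u v y x := by
  unfold doublyResolves
  omega

lemma Connected.doublyResolves_self (hconn : G.Connected) {x y : V} (hxy : x ≠ y) :
    doublyResolves G x y x y := by
  have := hconn.pos_dist_of_ne hxy
  have := hconn.pos_dist_of_ne hxy.symm
  unfold doublyResolves
  rw [dist_self, dist_self]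
  omega

lemma Connected.isMLDSet_univ (hconn : G.Connected) : isMLDSet G Set.univ :=
  ⟨fun x _ hxy => ⟨x, trivial, by rw [dist_self]; exact (hconn.pos_dist_of_ne hxy).ne⟩,
    fun x hx => absurd trivial hx⟩

lemma Connected.mem_inter_and_isOneFarther (hconn : G.Connected) {S₁ S₂ : Set V}
    (hdom₁ : isDominatingSet G S₁) (hdom₂ : isDominatingSet G S₂) {x y : V} {c : ℤ} (hc : c < 0)
    (hconst : ∀ v ∈ S₁ ∪ S₂, (G.dist v x : ℤ) - G.dist v y = c) :
    x ∈ S₁ ∩ S₂ ∧ G.IsOneFarther (S₁ ∪ S₂) x y := by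
  have hy : y ∉ S₁ ∪ S₂ := fun hy => by
    have := hconst y hy
    rw [dist_self] at this
    omega
  have dominator_eq (S : Set V) (hSW : S ⊆ S₁ ∪ S₂) (hdom : isDominatingSet G S)
      (hyS : y ∉ S) : x ∈ S ∧ c = -1 := by
    obtain ⟨v, hvS, hadj⟩ := hdom y hyS
    have hv := hconst v (hSW hvS)
    rw [dist_eq_one_iff_adj.mpr hadj] at hv
    have hvx : v = x := hconn.dist_eq_zero_iff.mp (by omega)
    subst hvx
    rw [dist_self] at hv
    exact ⟨hvS, by omega⟩
  obtain ⟨hx₁, hc₁⟩ := dominator_eq S₁ Set.subset_union_left hdom₁ (fun h => hy (.inl h))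
  obtain ⟨hx₂, -⟩ := dominator_eq S₂ Set.subset_union_right hdom₂ (fun h => hy (.inr h))
  refine ⟨⟨hx₁, hx₂⟩, hy, fun w hw => ?_⟩
  have := hconst w hw
  omega

lemma Connected.isDoublyResolvingSet_union_image_oneFarther (hconn : G.Connected)
    {S₁ S₂ : Set V} (h₁ : isMLDSet G S₁) (hdom₂ : isDominatingSet G S₂) :
    isDoublyResolvingSet G (S₁ ∪ S₂ ∪ G.oneFarther (S₁ ∪ S₂) '' (S₁ ∩ S₂)) := by
  set W := S₁ ∪ S₂
  have of_lt : ∀ x y, x ≠ y → ∀ u ∈ S₁, G.dist u x < G.dist u y →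
      setDoublyResolves G (W ∪ G.oneFarther W '' (S₁ ∩ S₂)) x y := by
    intro x y hxy u hu hlt
    by_cases hconst : ∀ v ∈ W, (G.dist v x : ℤ) - G.dist v y = (G.dist u x : ℤ) - G.dist u y
    · obtain ⟨hx, hfar⟩ := hconn.mem_inter_and_isOneFarther h₁.2 hdom₂ (by omega) hconst
      have hy : G.oneFarther W x = y := hfar.oneFarther_eq h₁.1 Set.subset_union_left
      exact ⟨x, .inl (.inl hx.1), y, .inr ⟨x, hx, hy⟩, hconn.doublyResolves_self hxy⟩
    · push Not at hconst
      obtain ⟨v, hv, hne⟩ := hconst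
      exact ⟨v, .inl hv, u, .inl (.inl hu), hne⟩
  intro x y hxy
  obtain ⟨u, hu, hne⟩ := h₁.1 x y hxy
  rcases hne.lt_or_gt with hlt | hgt
  · exact of_lt x y hxy u hu hlt
  · obtain ⟨a, ha, b, hb, hab⟩ := of_lt y x hxy.symm u hu hgt
    exact ⟨a, ha, b, hb, doublyResolves_comm.mpr hab⟩

end SimpleGraph

namespace Set

variable {α : Type*}

lemma ncard_union_image_inter_le_union_add_inter (s t : Set α) (f : α → α) :
    (s ∪ t ∪ f '' (s ∩ t)).ncard ≤ (s ∪ t).ncard + (s ∩ t).ncard := by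
  by_cases hfin : (s ∪ t).Finite
  · calc (s ∪ t ∪ f '' (s ∩ t)).ncard ≤ (s ∪ t).ncard + (f '' (s ∩ t)).ncard :=
          ncard_union_le _ _
      _ ≤ (s ∪ t).ncard + (s ∩ t).ncard :=
          Nat.add_le_add_left
            (ncard_image_le (hfin.subset (inter_subset_left.trans subset_union_left))) _
  · rw [(Infinite.mono subset_union_left hfin).ncard]
    exact Nat.zero_le _

lemma ncard_union_image_inter_le_add (s t : Set α) (f : α → α) :
    (s ∪ t ∪ f '' (s ∩ t)).ncard ≤ s.ncard + t.ncard := by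
  by_cases hfin : (s ∪ t).Finite
  · rw [← ncard_union_add_ncard_inter s t (hfin.subset subset_union_left)
      (hfin.subset subset_union_right)]
    exact ncard_union_image_inter_le_union_add_inter s t f
  · rw [(Infinite.mono subset_union_left hfin).ncard]
    exact Nat.zero_le _

end Set

theorem stmt18_general {V : Type*} (G : SimpleGraph V)
    (hconn : G.Connected) :
    psiNum G ≤ mldNum G + domNum G ∧
      ∀ S₁ S₂ : Set V, isMLDSet G S₁ → S₁.ncard = mldNum G →
        isDominatingSet G S₂ → S₂.ncard = domNum G →
        ∃ D : Set V, isDoublyResolvingSet G D ∧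
          D.ncard ≤ (S₁ ∪ S₂).ncard + (S₁ ∩ S₂).ncard := by
  refine ⟨?_, fun S₁ S₂ h₁ _ h₂ _ =>
    ⟨_, hconn.isDoublyResolvingSet_union_image_oneFarther h₁ h₂,
      Set.ncard_union_image_inter_le_union_add_inter S₁ S₂ _⟩⟩
  obtain ⟨S₁, h₁, hS₁⟩ : mldNum G ∈ {n | ∃ S : Set V, isMLDSet G S ∧ S.ncard = n} :=
    Nat.sInf_mem ⟨_, _, hconn.isMLDSet_univ, rfl⟩
  obtain ⟨S₂, h₂, hS₂⟩ : domNum G ∈ {n | ∃ S : Set V, isDominatingSet G S ∧ S.ncard = n} :=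
    Nat.sInf_mem ⟨_, _, hconn.isMLDSet_univ.2, rfl⟩
  calc psiNum G ≤ (S₁ ∪ S₂ ∪ G.oneFarther (S₁ ∪ S₂) '' (S₁ ∩ S₂)).ncard :=
        Nat.sInf_le ⟨_, hconn.isDoublyResolvingSet_union_image_oneFarther h₁ h₂, rfl⟩
    _ ≤ mldNum G + domNum G := hS₁ ▸ hS₂ ▸ Set.ncard_union_image_inter_le_add S₁ S₂ _

theorem stmt18 {V : Type*} [Fintype V] (G : SimpleGraph V)
    (hconn : G.Connected) (hcard : 2 ≤ Fintype.card V) :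
    psiNum G ≤ mldNum G + domNum G ∧
      ∀ S₁ S₂ : Set V, isMLDSet G S₁ → S₁.ncard = mldNum G →
        isDominatingSet G S₂ → S₂.ncard = domNum G →
        ∃ D : Set V, isDoublyResolvingSet G D ∧
          D.ncard ≤ (S₁ ∪ S₂).ncard + (S₁ ∩ S₂).ncard :=
  stmt18_general G hconn
end
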